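/- arXiv:1907.04876 — 6 statements merged into one kernel-verified Lean document; each statement's English description precedes it below -/
import Mathlib

section
/- Let ρ : ℝ^d → ℝ^d be a C²-diffeomorphism such that |Dρ(x)| ≤ N and |D²ρ(x)| ≤ N for all x ∈ ℝ^d, and such that its inverse satisfies |D(ρ^{−1})(y)| ≤ N′ for all y ∈ ℝ^d, for constants N, N′ > 0. For ε > 0 and θ ∈ [0,1] set ρ_{ε,θ} := θρ + (1−θ)ρ^{(ε)}, where ρ^{(ε)} is the componentwise mollification of ρ. Then for every ε ∈ (0, 1/(2NN′)) and θ ∈ [0,1] one has |x − y| ≤ 2N′ |ρ_{ε,θ}(x) − ρ_{ε,θ}(y)| for all x, y ∈ ℝ^d. -/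
open MeasureTheory Filter Finset Function
noncomputable section

/-- `ℝ^d` with the Euclidean norm. -/
abbrev Euc (d : ℕ) := EuclideanSpace ℝ (Fin d)

/-- A fixed mollifier kernel: smooth, nonnegative, supported in the unit ball,
symmetric, of total integral one. -/
def IsMollifier (d : ℕ) (kk : Euc d → ℝ) : Prop :=
  ContDiff ℝ (⊤ : ℕ∞) kk ∧ (∀ x, 0 ≤ kk x) ∧ (∀ x : Euc d, 1 ≤ ‖x‖ → kk x = 0) ∧
  (∀ x, kk (-x) = kk x) ∧ (∫ x : Euc d, kk x) = 1

/-- Mollification `v^{(ε)}(x) = ε^{-d} ∫ v(y) k((x-y)/ε) dy`. -/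
def mollify {F : Type*} [NormedAddCommGroup F] [NormedSpace ℝ F] [CompleteSpace F]
    (d : ℕ) (kk : Euc d → ℝ) (ε : ℝ) (v : Euc d → F) : Euc d → F :=
  fun x => (ε ^ d)⁻¹ • ∫ y : Euc d, kk (ε⁻¹ • (x - y)) • v y

lemma mollify_aux_integrable {d : ℕ} {kk : Euc d → ℝ} (hkc : Continuous kk)
    (hk0 : ∀ x : Euc d, 1 ≤ ‖x‖ → kk x = 0) {ε : ℝ} (hε : 0 < ε) (c : Euc d)
    {F : Type*} [NormedAddCommGroup F] [NormedSpace ℝ F] {h : Euc d → F} (hh : Continuous h) :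
    MeasureTheory.Integrable (fun w => kk (ε⁻¹ • (c - w)) • h w) := by
  apply Continuous.integrable_of_hasCompactSupport
  · exact (hkc.comp (((continuous_const.sub continuous_id)).const_smul ε⁻¹)).smul hh
  · apply HasCompactSupport.intro (isCompact_closedBall c ε)
    intro w hw
    have hd : ε < ‖c - w‖ := by
      simp only [Metric.mem_closedBall, not_le, dist_eq_norm] at hw
      rwa [norm_sub_rev] at hw
    have hz : kk (ε⁻¹ • (c - w)) = 0 := by
      apply hk0
      rw [norm_smul, Real.norm_eq_abs, abs_of_pos (inv_pos.mpr hε)]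
      calc (1:ℝ) = ε⁻¹ * ε := (inv_mul_cancel₀ hε.ne').symm
        _ ≤ ε⁻¹ * ‖c - w‖ := by gcongr
    simp [hz]

set_option maxHeartbeats 1000000 in
/-- For `ε < 1/(2NN')` the map `ρ_{ε,θ} = θρ + (1-θ)ρ^{(ε)}` satisfies
`|x - y| ≤ 2N' |ρ_{ε,θ}(x) - ρ_{ε,θ}(y)|`. -/
theorem mollified_lower_lipschitz (d : ℕ) (N N' : ℝ) (hd : 1 ≤ d) (hN : 0 < N) (hN' : 0 < N')
    (kk : Euc d → ℝ) (hkk : IsMollifier d kk)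
    (ρ g : Euc d → Euc d)
    (hg1 : Function.LeftInverse g ρ) (hg2 : Function.RightInverse g ρ)
    (hρ : ContDiff ℝ 2 ρ) (hgC : ContDiff ℝ 2 g)
    (hD1 : ∀ x, ‖fderiv ℝ ρ x‖ ≤ N) (hD2 : ∀ x, ‖iteratedFDeriv ℝ 2 ρ x‖ ≤ N)
    (hDg : ∀ y, ‖fderiv ℝ g y‖ ≤ N') :
    ∀ ε : ℝ, 0 < ε → ε < 1 / (2 * N * N') → ∀ θ ∈ Set.Icc (0:ℝ) 1, ∀ x y : Euc d,
      ‖x - y‖ ≤ 2 * N' *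
        ‖(θ • ρ x + (1 - θ) • mollify d kk ε ρ x) -
          (θ • ρ y + (1 - θ) • mollify d kk ε ρ y)‖ := by
  obtain ⟨hks, hknn, hkvan, hksym, hkint⟩ := hkk
  have hkc : Continuous kk := hks.continuous
  have hρd : Differentiable ℝ ρ := hρ.differentiable (by norm_num)
  have hgd : Differentiable ℝ g := hgC.differentiable (by norm_num)
  have hρd1 : ContDiff ℝ 1 (fderiv ℝ ρ) := hρ.fderiv_right (by norm_num)
  have hρdd : Differentiable ℝ (fderiv ℝ ρ) := hρd1.differentiable (by norm_num)
  -- second derivative bound gives Lipschitz bound on fderiv ρ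
  have hsnd : ∀ z, ‖fderiv ℝ (fderiv ℝ ρ) z‖ ≤ N := by
    intro z
    apply ContinuousLinearMap.opNorm_le_bound _ hN.le
    intro a
    rw [mul_comm]
    apply ContinuousLinearMap.opNorm_le_bound _ (by positivity)
    intro b
    have h2a : fderiv ℝ (fderiv ℝ ρ) z a b = iteratedFDeriv ℝ 2 ρ z ![a, b] := by
      rw [iteratedFDeriv_two_apply]; simp
    rw [h2a]
    calc ‖iteratedFDeriv ℝ 2 ρ z ![a, b]‖
        ≤ ‖iteratedFDeriv ℝ 2 ρ z‖ * ∏ i, ‖![a, b] i‖ :=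
          (iteratedFDeriv ℝ 2 ρ z).le_opNorm _
      _ = ‖iteratedFDeriv ℝ 2 ρ z‖ * (‖a‖ * ‖b‖) := by
          rw [Fin.prod_univ_two]; simp
      _ ≤ N * (‖a‖ * ‖b‖) := by gcongr; exact hD2 z
      _ = ‖a‖ * N * ‖b‖ := by ring
  have hLipD : ∀ a b : Euc d, ‖fderiv ℝ ρ a - fderiv ℝ ρ b‖ ≤ N * ‖a - b‖ := by
    intro a b
    exact (convex_univ (𝕜 := ℝ)).norm_image_sub_le_of_norm_fderiv_le
      (fun u _ => hρdd u) (fun u _ => hsnd u) (Set.mem_univ b) (Set.mem_univ a)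
  -- g is Lipschitz with constant N'
  have hgLip : ∀ a b : Euc d, ‖g a - g b‖ ≤ N' * ‖a - b‖ := by
    intro a b
    exact (convex_univ (𝕜 := ℝ)).norm_image_sub_le_of_norm_fderiv_le
      (fun u _ => hgd u) (fun u _ => hDg u) (Set.mem_univ b) (Set.mem_univ a)
  intro ε hε hεlt θ hθ x y
  set v : Euc d := x - y with hv
  have hεd : (ε:ℝ) ^ d ≠ 0 := pow_ne_zero _ hε.ne'
  -- scaling : total mass of the rescaled kernel
  have Skk : (∫ w : Euc d, kk (ε⁻¹ • w)) = ε ^ d := by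
    rw [Measure.integral_comp_inv_smul_of_nonneg volume kk hε.le, hkint]
    simp [finrank_euclideanSpace_fin]
  have S' : (∫ w : Euc d, kk (ε⁻¹ • (y - w))) = ε ^ d := by
    rw [MeasureTheory.integral_sub_left_eq_self (fun u : Euc d => kk (ε⁻¹ • u)) volume y]
    exact Skk
  -- translation
  have T : (∫ w : Euc d, kk (ε⁻¹ • (x - w)) • ρ w)
      = ∫ w : Euc d, kk (ε⁻¹ • (y - w)) • ρ (w + v) := by
    have ht := MeasureTheory.integral_add_right_eq_self (μ := volume)
      (fun w : Euc d => kk (ε⁻¹ • (x - w)) • ρ w) v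
    have hxy2 : ∀ w : Euc d, x - (w + v) = y - w := fun w => by rw [hv]; abel
    rw [← ht]
    simp only [hxy2]
  have Cst : ∀ c : Euc d, (∫ w : Euc d, kk (ε⁻¹ • (y - w)) • c) = (ε ^ d) • c := by
    intro c
    rw [integral_smul_const, S']
  -- key identity
  have hI1 : Integrable (fun w : Euc d => kk (ε⁻¹ • (y - w)) • ρ (w + v)) :=
    mollify_aux_integrable hkc hkvan hε y (hρ.continuous.comp (by fun_prop))
  have hI2 : Integrable (fun w : Euc d => kk (ε⁻¹ • (y - w)) • ρ w) :=
    mollify_aux_integrable hkc hkvan hε y hρ.continuous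
  have hI3 : Integrable (fun w : Euc d => kk (ε⁻¹ • (y - w)) • (ρ x - ρ y)) :=
    mollify_aux_integrable hkc hkvan hε y continuous_const
  have hI12 : Integrable (fun w : Euc d =>
      kk (ε⁻¹ • (y - w)) • ρ (w + v) - kk (ε⁻¹ • (y - w)) • ρ w) := hI1.sub hI2
  have hkey : mollify d kk ε ρ x - mollify d kk ε ρ y - (ρ x - ρ y)
      = (ε ^ d)⁻¹ • ∫ w : Euc d, kk (ε⁻¹ • (y - w)) • (ρ (w + v) - ρ w - (ρ x - ρ y)) := by
    have e0 : (fun w : Euc d => kk (ε⁻¹ • (y - w)) • (ρ (w + v) - ρ w - (ρ x - ρ y)))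
        = fun w : Euc d => kk (ε⁻¹ • (y - w)) • ρ (w + v) - kk (ε⁻¹ • (y - w)) • ρ w
            - kk (ε⁻¹ • (y - w)) • (ρ x - ρ y) := by
      funext w; rw [smul_sub, smul_sub]
    have e1 : (∫ w : Euc d, kk (ε⁻¹ • (y - w)) • (ρ (w + v) - ρ w - (ρ x - ρ y)))
        = (∫ w : Euc d, kk (ε⁻¹ • (x - w)) • ρ w)
          - (∫ w : Euc d, kk (ε⁻¹ • (y - w)) • ρ w) - (ε ^ d) • (ρ x - ρ y) := by
      rw [e0, integral_sub hI12 hI3, integral_sub hI1 hI2, T, Cst]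
    unfold mollify
    rw [e1, smul_sub, smul_sub, inv_smul_smul₀ hεd]
  -- bound on the increment of `ρ(· + v) - ρ`
  have hF : ∀ w : Euc d, ‖ρ (w + v) - ρ w - (ρ x - ρ y)‖ ≤ (N * ‖v‖) * ‖w - y‖ := by
    intro w
    have hx : y + v = x := by rw [hv]; abel
    have hmv : ∀ u ∈ (Set.univ : Set (Euc d)),
        HasFDerivWithinAt (fun u : Euc d => ρ (u + v) - ρ u)
          (fderiv ℝ ρ (u + v) - fderiv ℝ ρ u) Set.univ u := by
      intro u _
      have h2 : HasFDerivAt (fun u : Euc d => u + v) (ContinuousLinearMap.id ℝ (Euc d)) u :=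
        (hasFDerivAt_id u).add_const v
      have h1 : HasFDerivAt (fun u : Euc d => ρ (u + v)) (fderiv ℝ ρ (u + v)) u := by
        have h3 := (hρd (u + v)).hasFDerivAt.comp u h2
        rw [ContinuousLinearMap.comp_id] at h3
        exact h3
      exact (h1.sub (hρd u).hasFDerivAt).hasFDerivWithinAt
    have hbd : ∀ u ∈ (Set.univ : Set (Euc d)),
        ‖fderiv ℝ ρ (u + v) - fderiv ℝ ρ u‖ ≤ N * ‖v‖ := by
      intro u _
      have h5 := hLipD (u + v) u
      have h6 : u + v - u = v := by abel
      rwa [h6] at h5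
    have h7 := (convex_univ (𝕜 := ℝ)).norm_image_sub_le_of_norm_hasFDerivWithin_le
      hmv hbd (Set.mem_univ y) (Set.mem_univ w)
    simpa [hx] using h7
  -- bound on the integral
  have hIbd : Integrable (fun w : Euc d => kk (ε⁻¹ • (y - w)) * ((N * ‖v‖) * ε)) := by
    have h8 := mollify_aux_integrable (F := ℝ) hkc hkvan hε y
      (h := fun _ => (N * ‖v‖) * ε) continuous_const
    simpa [smul_eq_mul] using h8
  have hKeyNorm : ‖mollify d kk ε ρ x - mollify d kk ε ρ y - (ρ x - ρ y)‖
      ≤ N * ε * ‖v‖ := by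
    rw [hkey]
    have hb : ‖∫ w : Euc d, kk (ε⁻¹ • (y - w)) • (ρ (w + v) - ρ w - (ρ x - ρ y))‖
        ≤ ∫ w : Euc d, kk (ε⁻¹ • (y - w)) * ((N * ‖v‖) * ε) := by
      apply norm_integral_le_of_norm_le hIbd
      apply Filter.Eventually.of_forall
      intro w
      by_cases hz : kk (ε⁻¹ • (y - w)) = 0
      · simp [hz]
      · have h1 : ‖ε⁻¹ • (y - w)‖ < 1 := by
          by_contra hc
          exact hz (hkvan _ (le_of_not_gt hc))
        have h2 : ‖w - y‖ ≤ ε := by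
          rw [norm_smul, Real.norm_eq_abs, abs_of_pos (inv_pos.mpr hε)] at h1
          have h2b := mul_lt_mul_of_pos_left h1 hε
          rw [← mul_assoc, mul_inv_cancel₀ hε.ne', one_mul, mul_one] at h2b
          rw [norm_sub_rev]
          exact h2b.le
        rw [norm_smul, Real.norm_eq_abs, abs_of_nonneg (hknn _)]
        have h3 := hF w
        have h4 : (N * ‖v‖) * ‖w - y‖ ≤ (N * ‖v‖) * ε := by
          gcongr
        exact mul_le_mul_of_nonneg_left (h3.trans h4) (hknn _)
    have hbint : (∫ w : Euc d, kk (ε⁻¹ • (y - w)) * ((N * ‖v‖) * ε))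
        = ε ^ d * ((N * ‖v‖) * ε) := by
      rw [MeasureTheory.integral_mul_const, S']
    rw [norm_smul, Real.norm_eq_abs, abs_of_nonneg (by positivity : (0:ℝ) ≤ (ε ^ d)⁻¹)]
    calc (ε ^ d)⁻¹ * ‖∫ w : Euc d, kk (ε⁻¹ • (y - w)) • (ρ (w + v) - ρ w - (ρ x - ρ y))‖
        ≤ (ε ^ d)⁻¹ * (ε ^ d * ((N * ‖v‖) * ε)) := by
          gcongr
          rw [← hbint]; exact hb
      _ = N * ε * ‖v‖ := by field_simp
  -- lower bound via the inverse
  have hlow : ‖v‖ ≤ N' * ‖ρ x - ρ y‖ := by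
    have h9 := hgLip (ρ x) (ρ y)
    rw [hg1 x, hg1 y] at h9
    exact h9
  -- algebraic identity for the convex combination
  set Mx := mollify d kk ε ρ x with hMx
  set My := mollify d kk ε ρ y with hMy
  have hcombo : (θ • ρ x + (1 - θ) • Mx) - (θ • ρ y + (1 - θ) • My)
      = (ρ x - ρ y) + (1 - θ) • (Mx - My - (ρ x - ρ y)) := by
    module
  have hθ1 : (1 - θ) ≤ 1 := by linarith [hθ.1]
  have hθ0 : 0 ≤ (1 - θ) := by linarith [hθ.2]
  have hA : ‖ρ x - ρ y‖ ≤ ‖(ρ x - ρ y) + (1 - θ) • (Mx - My - (ρ x - ρ y))‖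
      + (1 - θ) * ‖Mx - My - (ρ x - ρ y)‖ := by
    have h10 := norm_sub_le ((ρ x - ρ y) + (1 - θ) • (Mx - My - (ρ x - ρ y)))
      ((1 - θ) • (Mx - My - (ρ x - ρ y)))
    rw [add_sub_cancel_right] at h10
    calc ‖ρ x - ρ y‖
        ≤ ‖(ρ x - ρ y) + (1 - θ) • (Mx - My - (ρ x - ρ y))‖
          + ‖(1 - θ) • (Mx - My - (ρ x - ρ y))‖ := h10
      _ = ‖(ρ x - ρ y) + (1 - θ) • (Mx - My - (ρ x - ρ y))‖
          + (1 - θ) * ‖Mx - My - (ρ x - ρ y)‖ := by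
          rw [norm_smul, Real.norm_eq_abs, abs_of_nonneg hθ0]
  have hhalf : ε * (2 * N * N') < 1 := (lt_div_iff₀ (by positivity)).mp hεlt
  have hKnn : (0:ℝ) ≤ ‖Mx - My - (ρ x - ρ y)‖ := norm_nonneg _
  have hvnn : (0:ℝ) ≤ ‖v‖ := norm_nonneg _
  rw [hcombo]
  set C := ‖(ρ x - ρ y) + (1 - θ) • (Mx - My - (ρ x - ρ y))‖ with hC
  have hCnn : (0:ℝ) ≤ C := norm_nonneg _
  have s2 : (1 - θ) * ‖Mx - My - (ρ x - ρ y)‖ ≤ ‖Mx - My - (ρ x - ρ y)‖ :=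
    mul_le_of_le_one_left hKnn hθ1
  have s1 : ‖v‖ ≤ N' * C + N' * ‖Mx - My - (ρ x - ρ y)‖ := by
    calc ‖v‖ ≤ N' * ‖ρ x - ρ y‖ := hlow
      _ ≤ N' * (C + ‖Mx - My - (ρ x - ρ y)‖) := by gcongr; linarith [hA, s2]
      _ = N' * C + N' * ‖Mx - My - (ρ x - ρ y)‖ := by ring
  have s3 : N' * ‖Mx - My - (ρ x - ρ y)‖ ≤ N' * (N * ε * ‖v‖) :=
    mul_le_mul_of_nonneg_left hKeyNorm hN'.le
  have s4 : N' * (N * ε * ‖v‖) ≤ ‖v‖ / 2 := by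
    nlinarith [mul_nonneg (sub_nonneg.mpr hhalf.le) hvnn]
  linarith
end
end

section
/- Let K > 0, 0 ≤ η̄ ≤ K, and suppose η : ℝ^d → ℝ^d satisfies the standing assumption of order 3 with bound η̄. Then there is a constant N depending only on K and d such that for every continuously differentiable φ : ℝ^d → ℝ with φ and its first-order partial derivatives Lebesgue integrable one has ∫_{ℝ^d} (φ(x+η(x)) − φ(x)) dx ≤ N η̄ ∫_{ℝ^d} |φ(x)| dx. -/
open MeasureTheory Filter Finset
noncomputable section

/-- The standing assumption of order `j` with bound `ηbar` on `η : ℝ^d → ℝ^d`. -/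
def StandingAssumption (d : ℕ) (K ηbar : ℝ) (j : ℕ) (η : Euc d → Euc d) : Prop :=
  ContDiff ℝ j η ∧
  (∀ l ≤ j, ∀ x, ‖iteratedFDeriv ℝ l η x‖ ≤ ηbar) ∧
  ∀ x : Euc d, ∀ θ ∈ Set.Icc (0:ℝ) 1,
    K⁻¹ ≤ |(ContinuousLinearMap.id ℝ (Euc d) + θ • fderiv ℝ η x).det|

/-!
Write `T = id + η`. Since `η` is `C¹` with `Dη` bounded and `det (1 + θ Dη) ≥ K⁻¹` along the whole
segment `θ ∈ [0, 1]`, `T` is a bijection of `ℝ^d`: the operators `1 + θ Dη` range over a compact set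
of invertible operators, so their inverses are uniformly bounded by some `L`, hence the inverse of
`T_θ = id + θ η` is `L`-Lipschitz and `T_θ' = (id + (θ' - θ) η ∘ T_θ⁻¹) ∘ T_θ` is again bijective as
soon as `|θ' - θ| K L < 1` (a Lipschitz perturbation of the identity with constant `< 1`).

The change of variables `∫ φ = ∫ J · φ ∘ T`, `J = |det (1 + Dη)|`, then gives
`∫ (φ ∘ T - φ) = ∫ (1 - J) · φ ∘ T`. The determinant is `C¹`, hence Lipschitz on bounded sets, so
`|1 - J| ≤ C ‖Dη‖ ≤ C η̄`; and `∫ |φ ∘ T| ≤ K ∫ J · |φ ∘ T| = K ∫ |φ|` because `K J ≥ 1`.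
-/

open Function
open scoped NNReal

theorem IsCompact.exists_norm_ringInverse_le {R : Type*} [NormedRing R] [CompleteSpace R]
    {S : Set R} (hS : IsCompact S) (hu : ∀ a ∈ S, IsUnit a) :
    ∃ L : ℝ≥0, ∀ a ∈ S, ‖Ring.inverse a‖ ≤ L := by
  obtain ⟨L, hL⟩ := hS.exists_bound_of_continuousOn fun a ha => by
    obtain ⟨u, rfl⟩ := hu a ha
    exact (NormedRing.inverse_continuousAt u).continuousWithinAt
  exact ⟨L.toNNReal, fun a ha => (hL a ha).trans (Real.le_coe_toNNReal L)⟩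

theorem ContinuousLinearMap.norm_one_add_smul_le {E : Type*} [NormedAddCommGroup E]
    [NormedSpace ℝ E] {A : E →L[ℝ] E} {K θ : ℝ} (hA : ‖A‖ ≤ K)
    (hθ : θ ∈ Set.Icc (0 : ℝ) 1) : ‖1 + θ • A‖ ≤ 1 + K :=
  calc ‖1 + θ • A‖ ≤ 1 + |θ| * ‖A‖ := by
        refine (norm_add_le _ _).trans ?_
        rw [norm_smul, Real.norm_eq_abs]
        gcongr
        exact norm_id_le
    _ ≤ 1 + 1 * K := by
        gcongr
        exact abs_le.2 ⟨by linarith [hθ.1], hθ.2⟩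
    _ = 1 + K := by ring

section Determinant

variable {E : Type*} [NormedAddCommGroup E] [NormedSpace ℝ E] [FiniteDimensional ℝ E]

theorem ContinuousLinearMap.contDiff_det {n : WithTop ℕ∞} :
    ContDiff ℝ n fun A : E →L[ℝ] E => A.det := by
  let b := Module.finBasis ℝ E
  have hcoord : ∀ i j, ContDiff ℝ n fun A : E →L[ℝ] E => b.coord i (A (b j)) := fun i j =>
    (LinearMap.toContinuousLinearMap (b.coord i)).contDiff.comp
      (ContinuousLinearMap.apply ℝ E (b j)).contDiff
  have h : (fun A : E →L[ℝ] E => A.det) =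
      fun A => ∑ σ : Equiv.Perm _, (Equiv.Perm.sign σ : ℝ) * ∏ i, b.coord (σ i) (A (b i)) := by
    ext A
    rw [ContinuousLinearMap.det, ← LinearMap.det_toMatrix b, Matrix.det_apply]
    simp [LinearMap.toMatrix_apply, Units.smul_def]
  rw [h]
  fun_prop

theorem ContinuousLinearMap.exists_lipschitzOnWith_det (R : ℝ) :
    ∃ C, LipschitzOnWith C (fun A : E →L[ℝ] E => A.det) (Metric.closedBall 1 R) :=
  contDiff_det.contDiffOn.exists_lipschitzOnWith one_ne_zero (convex_closedBall _ _)
    (isCompact_closedBall _ _)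

theorem ContinuousLinearMap.exists_abs_det_one_add_sub_one_le (R : ℝ) :
    ∃ C : ℝ≥0, ∀ A : E →L[ℝ] E, ‖A‖ ≤ R → |(1 + A).det - 1| ≤ C * ‖A‖ := by
  obtain ⟨C, hC⟩ := exists_lipschitzOnWith_det (E := E) R
  refine ⟨C, fun A hA => ?_⟩
  have h1 : (1 : E →L[ℝ] E) ∈ Metric.closedBall 1 R :=
    Metric.mem_closedBall_self ((norm_nonneg A).trans hA)
  have h1A : 1 + A ∈ Metric.closedBall 1 R := by simpa [dist_eq_norm] using hA
  simpa [dist_eq_norm, Real.dist_eq, ContinuousLinearMap.det] using hC.dist_le_mul _ h1A _ h1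

theorem ContinuousLinearMap.exists_norm_inverse_le_of_le_abs_det (R : ℝ) {δ : ℝ} (hδ : 0 < δ) :
    ∃ L : ℝ≥0, ∀ A : E →L[ℝ] E, ‖A‖ ≤ R → δ ≤ |A.det| → IsUnit A ∧ ‖Ring.inverse A‖ ≤ L := by
  have hunit : ∀ A : E →L[ℝ] E, δ ≤ |A.det| → IsUnit A := fun A hA =>
    isUnit_iff_isUnit_toLinearMap.2 <| (LinearMap.isUnit_iff_isUnit_det _).2 <|
      isUnit_iff_ne_zero.2 (abs_pos.1 (hδ.trans_le hA))
  have hS : IsCompact {A : E →L[ℝ] E | ‖A‖ ≤ R ∧ δ ≤ |A.det|} :=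
    (isCompact_closedBall 0 R).of_isClosed_subset
      ((isClosed_le continuous_norm continuous_const).inter
        (isClosed_le continuous_const continuous_det.abs))
      fun A hA => by simpa using hA.1
  obtain ⟨L, hL⟩ := hS.exists_norm_ringInverse_le fun A hA => hunit A hA.2
  exact ⟨L, fun A hR hδA => ⟨hunit A hδA, hL A ⟨hR, hδA⟩⟩⟩

end Determinant

section Bijectivity

variable {E : Type*} [NormedAddCommGroup E] [NormedSpace ℝ E] [CompleteSpace E]

theorem bijective_add_of_lipschitzWith {u : E → E} {c : ℝ≥0} (hc : c < 1)
    (hu : LipschitzWith c u) : Bijective fun x => x + u x := by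
  have hf : ApproximatesLinearOn (fun x => x + u x)
      (ContinuousLinearEquiv.refl ℝ E : E →L[ℝ] E) Set.univ c := fun x _ y _ => by
    simpa [dist_eq_norm, add_sub_add_comm] using hu.dist_le_mul x y
  have hc' : Subsingleton E ∨ c < ‖((ContinuousLinearEquiv.refl ℝ E).symm : E →L[ℝ] E)‖₊⁻¹ := by
    rcases subsingleton_or_nontrivial E with h | h
    · exact .inl h
    · exact .inr (by simpa using hc)
  exact ⟨Set.injOn_univ.1 (hf.injOn hc'), hf.surjective hc'⟩

theorem lipschitzWith_invFun_of_hasStrictFDerivAt {f : E → E} {f' : E → E →L[ℝ] E} {L : ℝ≥0}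
    (hf : ∀ x, HasStrictFDerivAt f (f' x) x) (hu : ∀ x, IsUnit (f' x))
    (hL : ∀ x, ‖Ring.inverse (f' x)‖ ≤ L) (hbij : Bijective f) : LipschitzWith L (invFun f) := by
  have hg : ∀ y, HasFDerivAt (invFun f) (Ring.inverse (f' (invFun f y))) y := fun y => by
    obtain ⟨u, hfu⟩ := hu (invFun f y)
    have hf_unit : HasStrictFDerivAt f (u : E →L[ℝ] E) (invFun f y) := hfu ▸ hf _
    have h := hf_unit.to_local_left_inverse (f' := ContinuousLinearEquiv.unitsEquiv ℝ E u)
      (Filter.Eventually.of_forall (leftInverse_invFun hbij.1))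
    rw [rightInverse_invFun hbij.2 y] at h
    rw [← hfu, Ring.inverse_unit]
    exact h.hasFDerivAt
  refine lipschitzWith_of_nnnorm_fderiv_le (fun y => (hg y).differentiableAt) fun y => ?_
  rw [(hg y).fderiv, ← NNReal.coe_le_coe, coe_nnnorm]
  exact hL _

theorem bijective_add_smul_of_bijective_add_smul {η : E → E} (hη : ContDiff ℝ 1 η) {K L : ℝ≥0}
    (hηK : LipschitzWith K η) {θ θ' : ℝ} (hu : ∀ x, IsUnit (1 + θ • fderiv ℝ η x))
    (hL : ∀ x, ‖Ring.inverse (1 + θ • fderiv ℝ η x)‖ ≤ L) (hθ : |θ' - θ| * (K * L) < 1)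
    (hbij : Bijective fun x => x + θ • η x) : Bijective fun x => x + θ' • η x := by
  set T : E → E := fun x => x + θ • η x
  have hT : ∀ x, HasStrictFDerivAt T (1 + θ • fderiv ℝ η x) x := fun x =>
    (hasStrictFDerivAt_id x).add ((hη.hasStrictFDerivAt one_ne_zero).const_smul θ)
  have hinv := lipschitzWith_invFun_of_hasStrictFDerivAt hT hu hL hbij
  have hlip : LipschitzWith (‖θ' - θ‖₊ * (K * L)) fun y => (θ' - θ) • η (invFun T y) :=
    (lipschitzWith_smul (θ' - θ)).comp (hηK.comp hinv)
  have hcomp : (fun x => x + θ' • η x) = (fun y => y + (θ' - θ) • η (invFun T y)) ∘ T := by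
    ext x
    simp only [comp_apply, leftInverse_invFun hbij.1 x, T, sub_smul]
    abel
  rw [hcomp]
  refine (bijective_add_of_lipschitzWith ?_ hlip).comp hbij
  rw [← NNReal.coe_lt_one]
  simpa using hθ

theorem bijective_add_of_forall_norm_ringInverse_le {η : E → E} (hη : ContDiff ℝ 1 η) {K L : ℝ≥0}
    (hηK : LipschitzWith K η)
    (hinv : ∀ θ ∈ Set.Icc (0 : ℝ) 1, ∀ x,
      IsUnit (1 + θ • fderiv ℝ η x) ∧ ‖Ring.inverse (1 + θ • fderiv ℝ η x)‖ ≤ L) :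
    Bijective fun x => x + η x := by
  obtain ⟨n, hn⟩ := exists_nat_gt (K * L : ℝ)
  have hn0 : (0 : ℝ) < n := lt_of_le_of_lt (by positivity) hn
  have hstep : ∀ k ≤ n, Bijective fun x => x + ((k : ℝ) / n) • η x := by
    intro k hk
    induction k with
    | zero =>
      simp only [Nat.cast_zero, zero_div, zero_smul, add_zero]
      exact bijective_id
    | succ k ih =>
      have hθ : (k : ℝ) / n ∈ Set.Icc (0 : ℝ) 1 :=
        ⟨by positivity, (div_le_one hn0).2 (by exact_mod_cast (Nat.le_succ k).trans hk)⟩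
      refine bijective_add_smul_of_bijective_add_smul hη hηK (hinv _ hθ · |>.1)
        (hinv _ hθ · |>.2) ?_ (ih (Nat.le_of_succ_le hk))
      rw [Nat.cast_succ, ← sub_div, add_sub_cancel_left, abs_of_pos (by positivity),
        one_div_mul_eq_div, div_lt_one hn0]
      exact hn
  simpa [hn0.ne'] using hstep n le_rfl

end Bijectivity

theorem bijective_add_of_le_abs_det {E : Type*} [NormedAddCommGroup E] [NormedSpace ℝ E]
    [FiniteDimensional ℝ E] {η : E → E} (hη : ContDiff ℝ 1 η) {K δ : ℝ} (hδ : 0 < δ)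
    (hηK : ∀ x, ‖fderiv ℝ η x‖ ≤ K)
    (hdet : ∀ x, ∀ θ ∈ Set.Icc (0 : ℝ) 1, δ ≤ |(1 + θ • fderiv ℝ η x).det|) :
    Bijective fun x => x + η x := by
  obtain ⟨L, hL⟩ := ContinuousLinearMap.exists_norm_inverse_le_of_le_abs_det (E := E) (1 + K) hδ
  have hηLip : LipschitzWith K.toNNReal η :=
    lipschitzWith_of_nnnorm_fderiv_le (hη.differentiable one_ne_zero) fun x => by
      rw [← NNReal.coe_le_coe, coe_nnnorm]
      exact (hηK x).trans (Real.le_coe_toNNReal K)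
  exact bijective_add_of_forall_norm_ringInverse_le hη hηLip fun θ hθ x =>
    hL _ (ContinuousLinearMap.norm_one_add_smul_le (hηK x) hθ) (hdet x θ hθ)

section ChangeOfVariables

variable {E F : Type*} [NormedAddCommGroup E] [NormedSpace ℝ E] [FiniteDimensional ℝ E]
  [MeasurableSpace E] [BorelSpace E] [NormedAddCommGroup F] [NormedSpace ℝ F]
  (μ : Measure E) [μ.IsAddHaarMeasure] {T : E → E} {T' : E → E →L[ℝ] E}

theorem integral_eq_integral_abs_det_fderiv_smul_of_bijective
    (hT : ∀ x, HasFDerivAt T (T' x) x) (hbij : Bijective T) (g : E → F) :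
    ∫ y, g y ∂μ = ∫ x, |(T' x).det| • g (T x) ∂μ := by
  simpa [hbij.2.range_eq] using integral_image_eq_integral_abs_det_fderiv_smul μ
    MeasurableSet.univ (fun x _ => (hT x).hasFDerivWithinAt) hbij.1.injOn g

theorem integrable_iff_integrable_abs_det_fderiv_smul_of_bijective
    (hT : ∀ x, HasFDerivAt T (T' x) x) (hbij : Bijective T) (g : E → F) :
    Integrable g μ ↔ Integrable (fun x => |(T' x).det| • g (T x)) μ := by
  simpa [hbij.2.range_eq] using integrableOn_image_iff_integrableOn_abs_det_fderiv_smul μ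
    MeasurableSet.univ (fun x _ => (hT x).hasFDerivWithinAt) hbij.1.injOn g

theorem integral_comp_sub_le_mul_integral_abs (hT : ∀ x, HasFDerivAt T (T' x) x)
    (hbij : Bijective T) {K ε : ℝ} (hJK : ∀ x, 1 ≤ K * |(T' x).det|)
    (hJε : ∀ x, |1 - (|(T' x).det|)| ≤ ε) {φ : E → ℝ} (hφ : Integrable φ μ) :
    ∫ x, (φ (T x) - φ x) ∂μ ≤ ε * K * ∫ x, |φ x| ∂μ := by
  set J : E → ℝ := fun x => |(T' x).det|
  have hJφ : Integrable (fun x => J x * φ (T x)) μ :=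
    (integrable_iff_integrable_abs_det_fderiv_smul_of_bijective μ hT hbij φ).1 hφ
  have hJφabs : Integrable (fun x => J x * |φ (T x)|) μ :=
    (integrable_iff_integrable_abs_det_fderiv_smul_of_bijective μ hT hbij _).1 hφ.abs
  have hJ : Measurable J := by
    have hT' : T' = fderiv ℝ T := funext fun x => (hT x).fderiv.symm
    simp only [J, hT']
    exact (ContinuousLinearMap.continuous_det.measurable.comp (measurable_fderiv ℝ T)).abs
  have hJpos : ∀ x, 0 < J x := fun x => (abs_nonneg _).lt_of_ne fun h => by
    have h1 := hJK x
    rw [← h, mul_zero] at h1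
    exact zero_lt_one.not_ge h1
  have hφT : Integrable (fun x => φ (T x)) μ := by
    refine (hJφ.bdd_mul (c := K) hJ.inv.aestronglyMeasurable
      (Eventually.of_forall fun x => ?_)).congr (Eventually.of_forall fun x => ?_)
    · rw [Pi.inv_apply, Real.norm_eq_abs, abs_of_pos (inv_pos.2 (hJpos x)),
        inv_le_iff_one_le_mul₀ (hJpos x)]
      exact hJK x
    · simp [(hJpos x).ne']
  have hpointwise : ∀ x, φ (T x) - J x * φ (T x) ≤ ε * |φ (T x)| := fun x =>
    calc φ (T x) - J x * φ (T x) = (1 - J x) * φ (T x) := by ring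
      _ ≤ |1 - J x| * |φ (T x)| := by rw [← abs_mul]; exact le_abs_self _
      _ ≤ ε * |φ (T x)| := by gcongr; exact hJε x
  have hε : 0 ≤ ε := (abs_nonneg _).trans (hJε 0)
  calc ∫ x, (φ (T x) - φ x) ∂μ = ∫ x, (φ (T x) - J x * φ (T x)) ∂μ := by
        rw [integral_sub hφT hφ, integral_sub hφT hJφ,
          integral_eq_integral_abs_det_fderiv_smul_of_bijective μ hT hbij φ]
        rfl
    _ ≤ ∫ x, ε * |φ (T x)| ∂μ := integral_mono (hφT.sub hJφ) (hφT.abs.const_mul ε) hpointwise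
    _ ≤ ∫ x, ε * K * (J x * |φ (T x)|) ∂μ := by
        refine integral_mono (hφT.abs.const_mul ε) (hJφabs.const_mul _) fun x => ?_
        rw [show ε * K * (J x * |φ (T x)|) = ε * ((K * J x) * |φ (T x)|) by ring]
        exact mul_le_mul_of_nonneg_left (le_mul_of_one_le_left (abs_nonneg _) (hJK x)) hε
    _ = ε * K * ∫ x, |φ x| ∂μ := by
        rw [integral_const_mul,
          integral_eq_integral_abs_det_fderiv_smul_of_bijective μ hT hbij fun y => |φ y|]
        rfl

end ChangeOfVariables

theorem integral_Iη_bound_general (d : ℕ) (K : ℝ) (hK : 0 < K) :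
    ∃ N : ℝ, 0 < N ∧
      ∀ (ηbar : ℝ) (η : Euc d → Euc d), 0 ≤ ηbar → ηbar ≤ K →
        StandingAssumption d K ηbar 3 η →
        ∀ φ : Euc d → ℝ, ContDiff ℝ 1 φ →
          (∀ l ≤ 1, Integrable (fun x => ‖iteratedFDeriv ℝ l φ x‖)) →
          (∫ x : Euc d, (φ (x + η x) - φ x))
            ≤ N * ηbar * ∫ x : Euc d, |φ x| := by
  obtain ⟨C, hC⟩ := ContinuousLinearMap.exists_abs_det_one_add_sub_one_le (E := Euc d) K
  refine ⟨(C + 1) * K, by positivity, ?_⟩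
  rintro ηbar η - hηbarK ⟨hη, hηbound, hdet⟩ φ hφ hφint
  have hη1 : ContDiff ℝ 1 η := hη.of_le (by norm_num)
  have hDη : ∀ x, ‖fderiv ℝ η x‖ ≤ ηbar := fun x => by
    simpa [norm_iteratedFDeriv_one] using hηbound 1 (by norm_num) x
  have hT : Bijective fun x => x + η x :=
    bijective_add_of_le_abs_det hη1 (inv_pos.2 hK) (fun x => (hDη x).trans hηbarK) hdet
  have hT' : ∀ x, HasFDerivAt (fun x => x + η x) (1 + fderiv ℝ η x) x := fun x =>
    (hasFDerivAt_id x).add ((hη1.differentiable one_ne_zero) x).hasFDerivAt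
  have hφ₀ : Integrable φ := by
    have h := hφint 0 zero_le_one
    simp only [norm_iteratedFDeriv_zero] at h
    exact (integrable_norm_iff hφ.continuous.aestronglyMeasurable).1 h
  have hJK : ∀ x, 1 ≤ K * |(1 + fderiv ℝ η x).det| := fun x => by
    have h := hdet x 1 ⟨zero_le_one, le_rfl⟩
    rw [one_smul] at h
    exact (inv_le_iff_one_le_mul₀' hK).1 h
  have hJε : ∀ x, |1 - (|(1 + fderiv ℝ η x).det|)| ≤ (C + 1) * ηbar := fun x =>
    calc |1 - (|(1 + fderiv ℝ η x).det|)| ≤ |(1 + fderiv ℝ η x).det - 1| := by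
          simpa [abs_sub_comm] using abs_abs_sub_abs_le_abs_sub (1 + fderiv ℝ η x).det 1
      _ ≤ C * ‖fderiv ℝ η x‖ := hC _ ((hDη x).trans hηbarK)
      _ ≤ (C + 1) * ηbar := by gcongr; exacts [le_add_of_nonneg_right zero_le_one, hDη x]
  calc ∫ x, (φ (x + η x) - φ x) ≤ (C + 1) * ηbar * K * ∫ x, |φ x| :=
        integral_comp_sub_le_mul_integral_abs volume hT' hT hJK hJε hφ₀
    _ = (C + 1) * K * ηbar * ∫ x, |φ x| := by ring

/-- Estimate of `∫ I^η φ` by `N η̄ ∫ |φ|`. -/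
theorem integral_Iη_bound (d : ℕ) (K : ℝ) (hd : 1 ≤ d) (hK : 0 < K) :
    ∃ N : ℝ, 0 < N ∧
      ∀ (ηbar : ℝ) (η : Euc d → Euc d), 0 ≤ ηbar → ηbar ≤ K →
        StandingAssumption d K ηbar 3 η →
        ∀ φ : Euc d → ℝ, ContDiff ℝ 1 φ →
          (∀ l ≤ 1, Integrable (fun x => ‖iteratedFDeriv ℝ l φ x‖)) →
          (∫ x : Euc d, (φ (x + η x) - φ x))
            ≤ N * ηbar * ∫ x : Euc d, |φ x| :=
  integral_Iη_bound_general d K hK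
end
end

section
/- Let (Ω, ℱ, P) be a probability space with a filtration (ℱ_t)_{t≥0}, let T ∈ [0,∞], and let f = (f_t)_{t≥0} and g = (g_t)_{t≥0} be nonnegative (ℱ_t)-adapted real-valued processes such that f has right-continuous paths with left limits (cadlag) and g has continuous paths. Assume that E[ f_τ · 1_{{g_0 ≤ c}} ] ≤ E[ g_τ · 1_{{g_0 ≤ c}} ] for every constant c > 0 and every bounded stopping time τ ≤ T. Then for every bounded stopping time τ ≤ T and every γ ∈ (0,1) one has E[ sup_{t ≤ τ} f_t^γ ] ≤ ((2 − γ)/(1 − γ)) · E[ sup_{t ≤ τ} g_t^γ ]. -/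
/-!
Write `F = sup_{t ≤ τ} f_t` and `G = sup_{t ≤ τ} g_t`. Fix a level `c > 0` and stop at
`π = ρ ∧ σ ∧ τ`, where `σ` is the first time `g` reaches `c` and `ρ` is (an approximation from
above of) the first time `f` exceeds `c`. On `{F > c, G < c}` we have `f_π ≥ c`, while on
`{g_0 ≤ c}` we have `g_π ≤ G ∧ c`; so the domination hypothesis at `π` gives Lenglart's estimate
`c P(F > c, G < c) ≤ E[G ∧ c]`. Integrating against `γ c^(γ-1) dc` (layer cake) and using
`∫_0^∞ (a ∧ c) c^(γ-2) dc = a^γ / (γ (1 - γ))` gives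
`E F^γ ≤ (1 / (1 - γ) + 1) E G^γ = (2 - γ) / (1 - γ) E G^γ`.
-/

open MeasureTheory Filter Set TopologicalSpace
open scoped NNReal ENNReal Topology
noncomputable section

section Paths

variable {h : ℝ≥0 → ℝ}

theorem bddAbove_range_Icc_of_cadlag (hrc : ∀ t, ContinuousWithinAt h (Ici t) t)
    (hll : ∀ t : ℝ≥0, 0 < t → ∃ L, Tendsto h (𝓝[<] t) (𝓝 L)) (b : ℝ≥0) :
    BddAbove (range fun s : Icc 0 b => h s) := by
  rw [← image_eq_range]
  refine isCompact_Icc.induction_on (by simp) (fun s t hst hb => hb.mono (image_mono hst))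
    (fun s t hs ht => by rw [image_union]; exact hs.union ht) fun x _ => ?_
  -- near `x`, `h` is bounded by `h x + 1` on the right and by the left limit plus one on the left
  obtain ⟨C, hC⟩ : ∃ C, ∀ᶠ y in 𝓝[<] x, h y < C := by
    rcases (zero_le : 0 ≤ x).eq_or_lt with rfl | hx
    · exact ⟨0, by simp⟩
    · obtain ⟨L, hL⟩ := hll x hx
      exact ⟨L + 1, hL.eventually_lt_const (lt_add_one L)⟩
  have hbound : ∀ᶠ y in 𝓝 x, h y ≤ max C (h x + 1) := by
    rw [← nhdsLT_sup_nhdsGE, eventually_sup]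
    exact ⟨hC.mono fun y hy => hy.le.trans (le_max_left _ _),
      ((hrc x).eventually_lt_const (lt_add_one _)).mono fun y hy => hy.le.trans (le_max_right _ _)⟩
  exact ⟨_, mem_nhdsWithin_of_mem_nhds hbound, max C (h x + 1),
    forall_mem_image.2 fun y hy => hy⟩

theorem exists_denseSeq_mem_Ioo_lt_of_lt {s t : ℝ≥0} {c : ℝ} (hrc : ContinuousWithinAt h (Ici s) s)
    (hst : s < t) (hc : c < h s) :
    ∃ k, denseSeq ℝ≥0 k ∈ Ioo s t ∧ c < h (denseSeq ℝ≥0 k) := by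
  obtain ⟨u, hsu, hu⟩ := mem_nhdsGE_iff_exists_Ico_subset.1 (hrc.eventually_const_lt hc)
  obtain ⟨k, hk⟩ := (denseRange_denseSeq ℝ≥0).exists_mem_open isOpen_Ioo
    (nonempty_Ioo.2 (lt_min hsu hst))
  exact ⟨k, ⟨hk.1, hk.2.trans_le (min_le_right _ _)⟩,
    hu ⟨hk.1.le, hk.2.trans_le (min_le_left _ _)⟩⟩

theorem lt_iSup_Icc_iff {t : ℝ≥0} {c : ℝ} (hrc : ∀ s, ContinuousWithinAt h (Ici s) s)
    (hbdd : BddAbove (range fun s : Icc 0 t => h s)) :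
    c < ⨆ s : Icc 0 t, h s ↔ c < h t ∨ ∃ k, denseSeq ℝ≥0 k < t ∧ c < h (denseSeq ℝ≥0 k) := by
  have : Nonempty (Icc 0 t) := ⟨⟨t, zero_le, le_rfl⟩⟩
  rw [lt_ciSup_iff hbdd]
  constructor
  · rintro ⟨⟨s, hs⟩, hcs⟩
    rcases hs.2.eq_or_lt with rfl | hst
    · exact Or.inl hcs
    · obtain ⟨k, hk, hck⟩ := exists_denseSeq_mem_Ioo_lt_of_lt (hrc s) hst hcs
      exact Or.inr ⟨k, hk.2, hck⟩
  · rintro (hc | ⟨k, hk, hc⟩)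
    exacts [⟨⟨t, zero_le, le_rfl⟩, hc⟩, ⟨⟨_, zero_le, hk.le⟩, hc⟩]

theorem Real.rpow_iSup {ι : Sort*} [Nonempty ι] {u : ι → ℝ} (hu : ∀ i, 0 ≤ u i)
    (hbdd : BddAbove (range u)) {γ : ℝ} (hγ : 0 < γ) :
    (⨆ i, u i) ^ γ = ⨆ i, u i ^ γ := by
  rw [iSup, ((Real.monotoneOn_rpow_Ici_of_exponent_nonneg hγ.le).mono
    (range_subset_iff.2 hu)).map_csSup_of_continuousWithinAt
    (Real.continuousAt_rpow_const _ _ (Or.inr hγ.le)).continuousWithinAt (range_nonempty u) hbdd,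
    ← range_comp, iSup]
  rfl

end Paths

section Measurability

variable {Ω : Type*} {ω : Ω}

theorem measurable_uncurry_of_continuousWithinAt_Ici {β : Type*} [TopologicalSpace β]
    [PseudoMetrizableSpace β] [MeasurableSpace β] [BorelSpace β] {m : MeasurableSpace Ω}
    {u : ℝ≥0 → Ω → β} (hrc : ∀ ω t, ContinuousWithinAt (u · ω) (Ici t) t)
    (hu : ∀ t, Measurable (u t)) : Measurable (Function.uncurry u) := by
  -- approximate times from the right by the grid `(n + 1)⁻¹ ℕ`
  let d (n : ℕ) (t : ℝ≥0) : ℝ≥0 := ⌈t * (n + 1)⌉₊ / (n + 1)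
  have hd : ∀ t, Tendsto (fun n => d n t) atTop (𝓝[≥] t) := fun t => by
    have hle : ∀ n : ℕ, t ≤ d n t := fun n => by
      rw [le_div_iff₀ (by positivity)]
      exact Nat.le_ceil _
    have hge : ∀ n : ℕ, d n t ≤ t + 1 / (n + 1) := fun n => by
      rw [div_le_iff₀ (by positivity), add_mul, one_div_mul_cancel (by positivity)]
      exact (Nat.ceil_lt_add_one zero_le).le
    refine tendsto_nhdsWithin_iff.2 ⟨tendsto_of_tendsto_of_tendsto_of_le_of_le tendsto_const_nhds
      ?_ hle hge, Eventually.of_forall hle⟩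
    simpa using tendsto_const_nhds.add (tendsto_one_div_add_atTop_nhds_zero_nat (𝕜 := ℝ≥0))
  refine measurable_of_tendsto_metrizable (f := fun n (p : ℝ≥0 × Ω) => u (d n p.1) p.2)
    (fun n => ?_) (tendsto_pi_nhds.2 fun p => (hrc p.2 p.1).tendsto.comp (hd p.1))
  have hgrid : Measurable fun q : ℕ × Ω => u (q.1 / (n + 1)) q.2 :=
    measurable_from_prod_countable_right fun k => hu ((k : ℝ≥0) / (n + 1))
  exact hgrid.comp (((measurable_fst.mul_const _).nat_ceil).prodMk measurable_snd)

def supUpTo (u : ℝ≥0 → Ω → ℝ) (τ : Ω → ℝ≥0) (ω : Ω) : ℝ := ⨆ s : Icc 0 (τ ω), u s ω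

variable {u : ℝ≥0 → Ω → ℝ} {τ : Ω → ℝ≥0}

theorem le_supUpTo (hbdd : BddAbove (range fun s : Icc 0 (τ ω) => u s ω)) {s : ℝ≥0}
    (hs : s ≤ τ ω) : u s ω ≤ supUpTo u τ ω :=
  le_ciSup hbdd (⟨s, zero_le, hs⟩ : Icc 0 (τ ω))

theorem supUpTo_rpow (hu : ∀ s, 0 ≤ u s ω)
    (hbdd : BddAbove (range fun s : Icc 0 (τ ω) => u s ω)) {γ : ℝ} (hγ : 0 < γ) :
    supUpTo u τ ω ^ γ = ⨆ s : Icc 0 (τ ω), u s ω ^ γ :=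
  have : Nonempty (Icc 0 (τ ω)) := ⟨⟨0, le_rfl, zero_le⟩⟩
  Real.rpow_iSup (fun s : Icc 0 (τ ω) => hu s) hbdd hγ

theorem setOf_lt_supUpTo (hrc : ∀ ω s, ContinuousWithinAt (u · ω) (Ici s) s)
    (hbdd : ∀ ω, BddAbove (range fun s : Icc 0 (τ ω) => u s ω)) (c : ℝ) :
    {ω | c < supUpTo u τ ω} = {ω | c < u (τ ω) ω} ∪
      ⋃ k, {ω | denseSeq ℝ≥0 k < τ ω} ∩ {ω | c < u (denseSeq ℝ≥0 k) ω} := by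
  ext ω
  simp [supUpTo, lt_iSup_Icc_iff (hrc ω) (hbdd ω)]

theorem measurable_supUpTo {m : MeasurableSpace Ω}
    (hrc : ∀ ω s, ContinuousWithinAt (u · ω) (Ici s) s)
    (hbdd : ∀ ω, BddAbove (range fun s : Icc 0 (τ ω) => u s ω)) (hu : ∀ s, Measurable (u s))
    (hτ : Measurable τ) : Measurable (supUpTo u τ) := by
  have huτ : Measurable fun ω => u (τ ω) ω :=
    (measurable_uncurry_of_continuousWithinAt_Ici hrc hu).comp (hτ.prodMk measurable_id)
  refine measurable_of_Ioi fun c => ?_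
  change MeasurableSet {ω | c < supUpTo u τ ω}
  rw [setOf_lt_supUpTo hrc hbdd]
  exact (huτ measurableSet_Ioi).union (.iUnion fun k =>
    (measurableSet_lt measurable_const hτ).inter (hu _ measurableSet_Ioi))

theorem measurable_supUpTo_const {m : MeasurableSpace Ω} {t : ℝ≥0}
    (hrc : ∀ ω s, ContinuousWithinAt (u · ω) (Ici s) s)
    (hbdd : ∀ ω, BddAbove (range fun s : Icc 0 t => u s ω))
    (hu : ∀ s ≤ t, Measurable (u s)) : Measurable (supUpTo u fun _ => t) := by
  refine measurable_of_Ioi fun c => ?_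
  change MeasurableSet {ω | c < supUpTo u (fun _ => t) ω}
  rw [setOf_lt_supUpTo hrc hbdd]
  refine (hu t le_rfl measurableSet_Ioi).union (.iUnion fun k => ?_)
  by_cases hk : denseSeq ℝ≥0 k < t
  · simp only [hk, ofPred_true, univ_inter]
    exact hu _ hk.le measurableSet_Ioi
  · simp [hk]

end Measurability

section StoppingTimes

variable {Ω ι : Type*} {m0 : MeasurableSpace Ω}

theorem MeasureTheory.IsStoppingTime.measurable_of_coe {ℱ : Filtration ℝ≥0 m0} {τ : Ω → ℝ≥0}
    (hτ : IsStoppingTime ℱ fun ω => (τ ω : WithTop ℝ≥0)) : Measurable τ :=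
  (WithTop.measurable_untopD 0).comp hτ.measurable'

def firstEntry [LinearOrder ι] (D : Finset ι) (E : ι → Set Ω) (B : ι) (ω : Ω) : ι := by
  classical exact (insert B {i ∈ D | ω ∈ E i}).min' (Finset.insert_nonempty _ _)

section FirstEntry

variable [LinearOrder ι] {D : Finset ι} {E : ι → Set Ω} {B : ι} {ω : Ω}

theorem firstEntry_le_iff {t : ι} :
    firstEntry D E B ω ≤ t ↔ B ≤ t ∨ ∃ i ∈ D, i ≤ t ∧ ω ∈ E i := by
  classical
  rw [firstEntry, ← not_lt, Finset.lt_min'_iff]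
  simp only [Finset.mem_insert, Finset.mem_filter, forall_eq_or_imp, not_and_or, not_forall,
    not_lt]
  tauto

theorem firstEntry_eq_or_mem : firstEntry D E B ω = B ∨ ω ∈ E (firstEntry D E B ω) := by
  classical
  have h := Finset.min'_mem (insert B {i ∈ D | ω ∈ E i}) (Finset.insert_nonempty _ _)
  rw [Finset.mem_insert, Finset.mem_filter] at h
  exact h.imp id And.right

theorem firstEntry_anti {D' : Finset ι} (h : D ⊆ D') :
    firstEntry D' E B ω ≤ firstEntry D E B ω := by
  classical
  exact Finset.min'_subset _ (Finset.insert_subset_insert _ (Finset.filter_subset_filter _ h))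

theorem isStoppingTime_firstEntry {ℱ : Filtration ι m0} (hE : ∀ i ∈ D, MeasurableSet[ℱ i] (E i)) :
    IsStoppingTime ℱ fun ω => ((firstEntry D E B ω : ι) : WithTop ι) := by
  intro t
  have h : {ω | ((firstEntry D E B ω : ι) : WithTop ι) ≤ t} =
      {_ω | B ≤ t} ∪ ⋃ i ∈ D, {ω | i ≤ t ∧ ω ∈ E i} := by
    ext
    simp only [mem_ofPred_eq, WithTop.coe_le_coe, firstEntry_le_iff, mem_union, mem_iUnion,
      exists_prop]
  rw [h]
  refine (MeasurableSet.const _).union (Finset.measurableSet_biUnion D fun i hi => ?_)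
  by_cases hit : i ≤ t
  · simpa [hit] using ℱ.mono hit _ (hE i hi)
  · simp [hit]

end FirstEntry

end StoppingTimes

section Hitting

variable {Ω ι : Type*} {m0 : MeasurableSpace Ω} [ConditionallyCompleteLinearOrder ι]
  [TopologicalSpace ι] [OrderTopology ι] {n m : ι} {ω : Ω}

theorem hittingBtwn_mem_set_of_isClosed {β : Type*} [TopologicalSpace β] {u : ι → Ω → β}
    {s : Set β} (hu : Continuous (u · ω)) (hs : IsClosed s)
    (h_exists : ∃ j ∈ Icc n m, u j ω ∈ s) : u (hittingBtwn u s n m ω) ω ∈ s := by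
  simp_rw [hittingBtwn, if_pos h_exists]
  obtain ⟨j, hj, hjs⟩ := h_exists
  exact ((isClosed_Icc.inter (hs.preimage hu)).csInf_mem ⟨j, hj, hjs⟩
    (bddBelow_Icc.inter_of_left)).2

theorem hittingBtwn_le_iff_of_lt_of_isClosed {β : Type*} [TopologicalSpace β] {u : ι → Ω → β}
    {s : Set β} (hu : Continuous (u · ω)) (hs : IsClosed s) {i : ι} (hi : i < m) :
    hittingBtwn u s n m ω ≤ i ↔ ∃ j ∈ Icc n i, u j ω ∈ s := by
  constructor
  · intro h
    by_cases h_exists : ∃ j ∈ Icc n m, u j ω ∈ s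
    · exact ⟨_, ⟨le_hittingBtwn_of_exists h_exists, h⟩,
        hittingBtwn_mem_set_of_isClosed hu hs h_exists⟩
    · simp only [hittingBtwn, if_neg h_exists] at h
      exact absurd hi h.not_gt
  · rintro ⟨j, hj, hjs⟩
    exact (hittingBtwn_le_of_mem hj.1 (hj.2.trans hi.le) hjs).trans hj.2

theorem le_of_le_hittingBtwn_Ici [DenselyOrdered ι] {u : ι → Ω → ℝ} {c : ℝ}
    (hu : Continuous (u · ω)) (hn : u n ω ≤ c) {t : ι} (hnt : n ≤ t)
    (ht : t ≤ hittingBtwn u (Ici c) n m ω) : u t ω ≤ c := by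
  rcases hnt.eq_or_lt with rfl | hnt
  · exact hn
  -- before the hitting time `u < c`, and `u ≤ c` is a closed condition
  have hIco : Ico n (hittingBtwn u (Ici c) n m ω) ⊆ {s | u s ω ≤ c} := fun s hs =>
    (not_le.1 (notMem_of_lt_hittingBtwn hs.2 hs.1)).le
  have hclosed := (isClosed_le hu continuous_const).closure_subset_iff.2 hIco
  rw [closure_Ico (hnt.trans_le ht).ne] at hclosed
  exact hclosed ⟨hnt.le, ht⟩

end Hitting

section ContinuousProcess

variable {Ω : Type*} {m0 : MeasurableSpace Ω} {g : ℝ≥0 → Ω → ℝ}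

theorem bddAbove_range_Icc_of_continuous {h : ℝ≥0 → ℝ} (hh : Continuous h) (t : ℝ≥0) :
    BddAbove (range fun s : Icc 0 t => h s) :=
  (isCompact_range (hh.comp continuous_subtype_val)).bddAbove

theorem exists_le_iff_le_supUpTo_const (hg : ∀ ω, Continuous (g · ω)) (c : ℝ) (t : ℝ≥0) (ω : Ω) :
    (∃ s ∈ Icc 0 t, c ≤ g s ω) ↔ c ≤ supUpTo g (fun _ => t) ω := by
  obtain ⟨s, hs, hmax⟩ := isCompact_Icc.exists_sSup_image_eq (nonempty_Icc.2 (zero_le : 0 ≤ t))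
    (hg ω).continuousOn
  rw [supUpTo, ← sSup_image' (f := (g · ω)), hmax]
  refine ⟨fun ⟨r, hr, hcr⟩ => hcr.trans ?_, fun hc => ⟨s, hs, hc⟩⟩
  exact le_csSup (isCompact_Icc.image (hg ω)).bddAbove (mem_image_of_mem _ hr) |>.trans hmax.le

theorem MeasureTheory.Adapted.isStoppingTime_hittingBtwn_Ici {ℱ : Filtration ℝ≥0 m0}
    (hg : Adapted ℱ g) (hg_cont : ∀ ω, Continuous (g · ω)) (c : ℝ) (B : ℝ≥0) :
    IsStoppingTime ℱ fun ω => ((hittingBtwn g (Ici c) 0 B ω : ℝ≥0) : WithTop ℝ≥0) := by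
  intro t
  simp only [WithTop.coe_le_coe]
  by_cases hBt : B ≤ t
  · simp [(hittingBtwn_le _).trans hBt]
  have h : {ω | hittingBtwn g (Ici c) 0 B ω ≤ t} = {ω | c ≤ supUpTo g (fun _ => t) ω} := by
    ext ω
    rw [mem_ofPred_eq, hittingBtwn_le_iff_of_lt_of_isClosed (hg_cont ω) isClosed_Ici
      (not_le.1 hBt)]
    exact exists_le_iff_le_supUpTo_const hg_cont c t ω
  rw [h]
  refine measurableSet_le measurable_const (measurable_supUpTo_const
    (fun ω s => (hg_cont ω).continuousWithinAt) (fun ω => bddAbove_range_Icc_of_continuous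
      (hg_cont ω) t) fun s hs => (hg s).mono (ℱ.mono hs) le_rfl)

end ContinuousProcess

section LayerCake

variable {α : Type*} {mα : MeasurableSpace α} {μ : Measure α} {γ : ℝ}

theorem lintegral_Ioi_min_mul_rpow (hγ0 : 0 < γ) (hγ1 : γ < 1) {a : ℝ} (ha : 0 ≤ a) :
    ∫⁻ t in Ioi 0, ENNReal.ofReal (min a t * t ^ (γ - 2)) =
      ENNReal.ofReal (a ^ γ / (γ * (1 - γ))) := by
  have h1γ : 1 - γ ≠ 0 := by linarith
  have hγ1' : γ - 1 ≠ 0 := by linarith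
  rcases ha.eq_or_lt with rfl | ha
  · rw [Real.zero_rpow hγ0.ne', zero_div, ENNReal.ofReal_zero]
    rw [setLIntegral_congr_fun measurableSet_Ioi fun t ht => by
      rw [min_eq_left (le_of_lt ht), zero_mul]]
    simp
  have h_low : ∫⁻ t in Ioc 0 a, ENNReal.ofReal (min a t * t ^ (γ - 2)) =
      ENNReal.ofReal (a ^ γ / γ) := by
    rw [setLIntegral_congr_fun measurableSet_Ioc fun t ht => by
      rw [min_eq_right ht.2, ← Real.rpow_one_add' ht.1.le (by linarith),
        show 1 + (γ - 2) = γ - 1 by ring],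
      ← ofReal_integral_eq_lintegral_ofReal
        (intervalIntegral.intervalIntegrable_rpow' (by linarith)).1
        ((ae_restrict_iff' measurableSet_Ioc).2
          (.of_forall fun t ht => Real.rpow_nonneg ht.1.le _)),
      ← intervalIntegral.integral_of_le ha.le, integral_rpow (Or.inl (by linarith)),
      sub_add_cancel, Real.zero_rpow hγ0.ne', sub_zero]
  have h_high : ∫⁻ t in Ioi a, ENNReal.ofReal (min a t * t ^ (γ - 2)) =
      ENNReal.ofReal (a ^ γ / (1 - γ)) := by
    rw [setLIntegral_congr_fun measurableSet_Ioi fun t ht => by rw [min_eq_left (le_of_lt ht)],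
      ← ofReal_integral_eq_lintegral_ofReal
        ((integrableOn_Ioi_rpow_of_lt (by linarith) ha).const_mul a)
        ((ae_restrict_iff' measurableSet_Ioi).2 (.of_forall fun t ht =>
          by have := ha.trans ht; positivity)),
      integral_const_mul, integral_Ioi_rpow_of_lt (by linarith) ha,
      show γ - 2 + 1 = γ - 1 by ring, Real.rpow_sub_one ha.ne']
    congr 1
    field_simp
    ring
  rw [← Ioc_union_Ioi_eq_Ioi ha.le, lintegral_union measurableSet_Ioi (Ioc_disjoint_Ioi le_rfl),
    h_low, h_high, ← ENNReal.ofReal_add (by positivity) (div_nonneg (by positivity) (by linarith))]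
  congr 1
  field_simp
  ring

theorem lintegral_Ioi_lintegral_min_mul_rpow [SFinite μ] {G : α → ℝ} (hG : Measurable G)
    (hG0 : ∀ ω, 0 ≤ G ω) (hγ0 : 0 < γ) (hγ1 : γ < 1) :
    ∫⁻ t in Ioi 0, (∫⁻ ω, ENNReal.ofReal (min (G ω) t) ∂μ) * ENNReal.ofReal (t ^ (γ - 2)) =
      ENNReal.ofReal (1 / (γ * (1 - γ))) * ∫⁻ ω, ENNReal.ofReal (G ω ^ γ) ∂μ := by
  calc ∫⁻ t in Ioi 0, (∫⁻ ω, ENNReal.ofReal (min (G ω) t) ∂μ) * ENNReal.ofReal (t ^ (γ - 2))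
      = ∫⁻ t in Ioi 0, ∫⁻ ω, ENNReal.ofReal (min (G ω) t * t ^ (γ - 2)) ∂μ := by
        refine setLIntegral_congr_fun measurableSet_Ioi fun t ht => ?_
        rw [← lintegral_mul_const _ (hG.min measurable_const).ennreal_ofReal]
        exact lintegral_congr fun ω => (ENNReal.ofReal_mul (le_min (hG0 ω) (le_of_lt ht))).symm
    _ = ∫⁻ ω, (∫⁻ t in Ioi 0, ENNReal.ofReal (min (G ω) t * t ^ (γ - 2))) ∂μ :=
        lintegral_lintegral_swap (((hG.comp measurable_snd).min measurable_fst).mul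
          (measurable_fst.pow_const _)).ennreal_ofReal.aemeasurable
    _ = ∫⁻ ω, ENNReal.ofReal (1 / (γ * (1 - γ))) * ENNReal.ofReal (G ω ^ γ) ∂μ := by
        refine lintegral_congr fun ω => ?_
        rw [lintegral_Ioi_min_mul_rpow hγ0 hγ1 (hG0 ω), ← ENNReal.ofReal_mul (by
          have : 0 < 1 - γ := by linarith
          positivity), one_div_mul_eq_div]
    _ = _ := lintegral_const_mul _ (hG.pow_const γ).ennreal_ofReal

theorem measure_lt_mul_rpow_le_of_mul_measure_le_lintegral_min {F G : α → ℝ} {t : ℝ} (ht : 0 < t)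
    (hFG : ENNReal.ofReal t * μ {ω | t < F ω ∧ G ω < t} ≤
      ∫⁻ ω, ENNReal.ofReal (min (G ω) t) ∂μ) :
    μ {ω | t < F ω} * ENNReal.ofReal (t ^ (γ - 1)) ≤
      (∫⁻ ω, ENNReal.ofReal (min (G ω) t) ∂μ) * ENNReal.ofReal (t ^ (γ - 2)) +
        μ {ω | t ≤ G ω} * ENNReal.ofReal (t ^ (γ - 1)) := by
  have htail : ENNReal.ofReal t * μ {ω | t < F ω} ≤
      ∫⁻ ω, ENNReal.ofReal (min (G ω) t) ∂μ + ENNReal.ofReal t * μ {ω | t ≤ G ω} := by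
    grw [← hFG, ← mul_add, ← measure_union_le]
    gcongr
    exact fun ω hω => (lt_or_ge (G ω) t).imp (fun h => ⟨hω, h⟩) id
  have hsplit :
      ENNReal.ofReal (t ^ (γ - 1)) = ENNReal.ofReal t * ENNReal.ofReal (t ^ (γ - 2)) := by
    rw [← ENNReal.ofReal_mul ht.le, show γ - 1 = 1 + (γ - 2) by ring, Real.rpow_add ht,
      Real.rpow_one]
  calc μ {ω | t < F ω} * ENNReal.ofReal (t ^ (γ - 1))
      = ENNReal.ofReal t * μ {ω | t < F ω} * ENNReal.ofReal (t ^ (γ - 2)) := by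
        rw [hsplit]; ring
    _ ≤ ((∫⁻ ω, ENNReal.ofReal (min (G ω) t) ∂μ) + ENNReal.ofReal t * μ {ω | t ≤ G ω}) *
        ENNReal.ofReal (t ^ (γ - 2)) := by
        gcongr
    _ = _ := by rw [add_mul, hsplit]; ring

theorem lintegral_rpow_le_of_mul_measure_le_lintegral_min [SFinite μ] {F G : α → ℝ}
    (hF0 : ∀ ω, 0 ≤ F ω) (hG0 : ∀ ω, 0 ≤ G ω) (hF : Measurable F) (hG : Measurable G)
    (hγ0 : 0 < γ) (hγ1 : γ < 1)
    (hFG : ∀ c : ℝ, 0 < c → ENNReal.ofReal c * μ {ω | c < F ω ∧ G ω < c} ≤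
      ∫⁻ ω, ENNReal.ofReal (min (G ω) c) ∂μ) :
    ∫⁻ ω, ENNReal.ofReal (F ω ^ γ) ∂μ ≤
      ENNReal.ofReal ((2 - γ) / (1 - γ)) * ∫⁻ ω, ENNReal.ofReal (G ω ^ γ) ∂μ := by
  have hanti : Antitone fun t : ℝ => μ {ω | t ≤ G ω} := fun s t hst =>
    measure_mono fun ω hω => hst.trans hω
  have hmeas : Measurable fun t : ℝ => μ {ω | t ≤ G ω} * ENNReal.ofReal (t ^ (γ - 1)) :=
    hanti.measurable.fun_mul (measurable_id.pow_const _).ennreal_ofReal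
  rw [lintegral_rpow_eq_lintegral_meas_lt_mul μ (.of_forall hF0) hF.aemeasurable hγ0]
  calc ENNReal.ofReal γ * ∫⁻ t in Ioi 0, μ {ω | t < F ω} * ENNReal.ofReal (t ^ (γ - 1))
      ≤ ENNReal.ofReal γ * ((∫⁻ t in Ioi 0, (∫⁻ ω, ENNReal.ofReal (min (G ω) t) ∂μ) *
          ENNReal.ofReal (t ^ (γ - 2))) +
        ∫⁻ t in Ioi 0, μ {ω | t ≤ G ω} * ENNReal.ofReal (t ^ (γ - 1))) := by
        rw [← lintegral_add_right _ hmeas]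
        gcongr ENNReal.ofReal γ * ?_
        exact setLIntegral_mono' measurableSet_Ioi fun t ht =>
          measure_lt_mul_rpow_le_of_mul_measure_le_lintegral_min ht (hFG t ht)
    _ = (ENNReal.ofReal (γ * (1 / (γ * (1 - γ)))) + 1) * ∫⁻ ω, ENNReal.ofReal (G ω ^ γ) ∂μ := by
        rw [lintegral_Ioi_lintegral_min_mul_rpow hG hG0 hγ0 hγ1,
          lintegral_rpow_eq_lintegral_meas_le_mul μ (.of_forall hG0) hG.aemeasurable hγ0,
          ENNReal.ofReal_mul hγ0.le]
        ring
    _ = _ := by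
        have : 0 < 1 - γ := by linarith
        rw [← ENNReal.ofReal_one, ← ENNReal.ofReal_add (by positivity) zero_le_one]
        congr 2
        field_simp
        ring

end LayerCake

section Domination

variable {Ω : Type*} {m0 : MeasurableSpace Ω} {P : Measure Ω} {ℱ : Filtration ℝ≥0 m0}
  {f g : ℝ≥0 → Ω → ℝ} {τ : Ω → ℝ≥0} {c : ℝ}

theorem ofReal_mul_measure_le_lintegral_min_supUpTo (hg : Adapted ℱ g)
    (hg_cont : ∀ ω, Continuous (g · ω)) (hτ : IsStoppingTime ℱ fun ω => (τ ω : WithTop ℝ≥0))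
    {b : ℝ≥0} (hb : ∀ ω, τ ω ≤ b)
    (hdom : ∀ π : Ω → ℝ≥0, IsStoppingTime ℱ (fun ω => (π ω : WithTop ℝ≥0)) →
      (∀ ω, π ω ≤ τ ω) → ∫⁻ ω in {ω | g 0 ω ≤ c}, ENNReal.ofReal (f (π ω) ω) ∂P ≤
        ∫⁻ ω in {ω | g 0 ω ≤ c}, ENNReal.ofReal (g (π ω) ω) ∂P)
    {ρ : Ω → ℝ≥0} (hρ : IsStoppingTime ℱ fun ω => (ρ ω : WithTop ℝ≥0))
    (hρf : ∀ ω, ρ ω ≤ τ ω → c ≤ f (ρ ω) ω) {A : Set Ω} (hA : MeasurableSet A)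
    (hA_sub : ∀ ω ∈ A, supUpTo g τ ω < c ∧ (ρ ω ≤ τ ω ∨ c ≤ f (τ ω) ω)) :
    ENNReal.ofReal c * P A ≤ ∫⁻ ω, ENNReal.ofReal (min (supUpTo g τ ω) c) ∂P := by
  let σ := hittingBtwn g (Ici c) 0 b
  let π ω := min (ρ ω) (min (σ ω) (τ ω))
  have hπ : IsStoppingTime ℱ fun ω => (π ω : WithTop ℝ≥0) := by
    simpa only [π, WithTop.coe_min] using
      hρ.min ((hg.isStoppingTime_hittingBtwn_Ici hg_cont c b).min hτ)
  have hπτ : ∀ ω, π ω ≤ τ ω := fun ω => (min_le_right _ _).trans (min_le_right _ _)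
  have hgbdd := fun ω => bddAbove_range_Icc_of_continuous (hg_cont ω) (τ ω)
  have hfπ : ∀ ω ∈ A, c ≤ f (π ω) ω := by
    intro ω hω
    obtain ⟨hG, hρτ⟩ := hA_sub ω hω
    have hτσ : τ ω ≤ σ ω := by
      by_contra! hστ
      obtain ⟨s, hs, hcs⟩ := (hittingBtwn_lt_iff _ (hb ω)).1 hστ
      exact (le_supUpTo (hgbdd ω) hs.2.le |>.trans_lt hG).not_ge hcs
    rcases le_or_gt (ρ ω) (τ ω) with h | h
    · rw [show π ω = ρ ω by simp [π, h, h.trans hτσ]]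
      exact hρf ω h
    · rw [show π ω = τ ω by simp [π, h.le, hτσ]]
      exact hρτ.resolve_left h.not_ge
  have hgπ : ∀ ω ∈ {ω | g 0 ω ≤ c}, g (π ω) ω ≤ min (supUpTo g τ ω) c := fun ω hω =>
    le_min (le_supUpTo (hgbdd ω) (hπτ ω)) (le_of_le_hittingBtwn_Ici (hg_cont ω) hω zero_le
      ((min_le_right _ _).trans (min_le_left _ _)))
  have hA_g0 : A ⊆ {ω | g 0 ω ≤ c} := fun ω hω =>
    ((le_supUpTo (hgbdd ω) zero_le).trans_lt (hA_sub ω hω).1).le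
  calc ENNReal.ofReal c * P A = ∫⁻ ω in A, ENNReal.ofReal c ∂P := (setLIntegral_const _ _).symm
    _ ≤ ∫⁻ ω in A, ENNReal.ofReal (f (π ω) ω) ∂P :=
        setLIntegral_mono' hA fun ω hω => ENNReal.ofReal_le_ofReal (hfπ ω hω)
    _ ≤ ∫⁻ ω in {ω | g 0 ω ≤ c}, ENNReal.ofReal (f (π ω) ω) ∂P := lintegral_mono_set hA_g0
    _ ≤ ∫⁻ ω in {ω | g 0 ω ≤ c}, ENNReal.ofReal (g (π ω) ω) ∂P := hdom π hπ hπτ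
    _ ≤ ∫⁻ ω in {ω | g 0 ω ≤ c}, ENNReal.ofReal (min (supUpTo g τ ω) c) ∂P :=
        setLIntegral_mono' (measurableSet_le ((hg 0).mono (ℱ.le 0) le_rfl) measurable_const)
          fun ω hω => ENNReal.ofReal_le_ofReal (hgπ ω hω)
    _ ≤ _ := setLIntegral_le_lintegral _ _

theorem exists_isStoppingTime_seq_approx_lt_supUpTo (hf : Adapted ℱ f)
    (hf_rc : ∀ ω t, ContinuousWithinAt (f · ω) (Ici t) t)
    (hf_bdd : ∀ ω, BddAbove (range fun s : Icc 0 (τ ω) => f s ω)) {b : ℝ≥0} (hb : ∀ ω, τ ω ≤ b)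
    (c : ℝ) :
    ∃ ρ : ℕ → Ω → ℝ≥0, (∀ n, IsStoppingTime ℱ fun ω => (ρ n ω : WithTop ℝ≥0)) ∧ Antitone ρ ∧
      (∀ n ω, ρ n ω ≤ τ ω → c < f (ρ n ω) ω) ∧
      ∀ ω, c < supUpTo f τ ω → c < f (τ ω) ω ∨ ∃ n, ρ n ω ≤ τ ω := by
  -- `f` may first exceed `c` at a time that is not a stopping time; approximate it from above
  -- by the first time on the finite grids `e 0, …, e n` that `f` exceeds `c`
  let e := denseSeq ℝ≥0
  refine ⟨fun n => firstEntry ((Finset.range (n + 1)).image e) (fun s => {ω | c < f s ω}) (b + 1),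
    fun n => isStoppingTime_firstEntry fun s _ => hf s measurableSet_Ioi,
    fun m n hmn ω => firstEntry_anti (Finset.image_subset_image
      (Finset.range_subset_range.2 (by omega))),
    fun n ω h => firstEntry_eq_or_mem.resolve_left
      (h.trans_lt ((hb ω).trans_lt (lt_add_one b))).ne, fun ω hF => ?_⟩
  refine ((lt_iSup_Icc_iff (hf_rc ω) (hf_bdd ω)).1 hF).imp_right fun ⟨k, hkτ, hfk⟩ => ⟨k, ?_⟩
  exact (firstEntry_le_iff.2 (Or.inr ⟨e k, Finset.mem_image_of_mem _
    (Finset.self_mem_range_succ k), le_rfl, hfk⟩)).trans hkτ.le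

theorem ofReal_mul_measure_lt_supUpTo_and_supUpTo_lt_le (hf : Adapted ℱ f) (hg : Adapted ℱ g)
    (hf_rc : ∀ ω t, ContinuousWithinAt (f · ω) (Ici t) t)
    (hf_bdd : ∀ ω, BddAbove (range fun s : Icc 0 (τ ω) => f s ω))
    (hg_cont : ∀ ω, Continuous (g · ω)) (hτ : IsStoppingTime ℱ fun ω => (τ ω : WithTop ℝ≥0))
    {b : ℝ≥0} (hb : ∀ ω, τ ω ≤ b)
    (hdom : ∀ π : Ω → ℝ≥0, IsStoppingTime ℱ (fun ω => (π ω : WithTop ℝ≥0)) →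
      (∀ ω, π ω ≤ τ ω) → ∫⁻ ω in {ω | g 0 ω ≤ c}, ENNReal.ofReal (f (π ω) ω) ∂P ≤
        ∫⁻ ω in {ω | g 0 ω ≤ c}, ENNReal.ofReal (g (π ω) ω) ∂P) :
    ENNReal.ofReal c * P {ω | c < supUpTo f τ ω ∧ supUpTo g τ ω < c} ≤
      ∫⁻ ω, ENNReal.ofReal (min (supUpTo g τ ω) c) ∂P := by
  obtain ⟨ρ, hρ, hρ_anti, hρf, hρ_cover⟩ :=
    exists_isStoppingTime_seq_approx_lt_supUpTo hf hf_rc hf_bdd hb c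
  let A (n : ℕ) := {ω | supUpTo g τ ω < c ∧ (ρ n ω ≤ τ ω ∨ c < f (τ ω) ω)}
  have hA_meas : ∀ n, MeasurableSet (A n) := by
    intro n
    have hτm := hτ.measurable_of_coe
    have hGm : Measurable (supUpTo g τ) := measurable_supUpTo
      (fun ω t => (hg_cont ω).continuousWithinAt)
      (fun ω => bddAbove_range_Icc_of_continuous (hg_cont ω) _)
      (fun t => (hg t).mono (ℱ.le t) le_rfl) hτm
    have hfτ : Measurable fun ω => f (τ ω) ω :=
      (measurable_uncurry_of_continuousWithinAt_Ici hf_rc fun t => (hf t).mono (ℱ.le t) le_rfl).comp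
        (hτm.prodMk measurable_id)
    exact (measurableSet_lt hGm measurable_const).inter
      (show MeasurableSet ({ω | ρ n ω ≤ τ ω} ∪ {ω | c < f (τ ω) ω}) from
        (measurableSet_le (hρ n).measurable_of_coe hτm).union
          (measurableSet_lt measurable_const hfτ))
  have hA_mono : Monotone A := fun m n hmn ω hω =>
    ⟨hω.1, hω.2.imp_left (hρ_anti hmn ω).trans⟩
  have hA_cover : {ω | c < supUpTo f τ ω ∧ supUpTo g τ ω < c} ⊆ ⋃ n, A n := by
    rintro ω ⟨hF, hG⟩
    rcases hρ_cover ω hF with hfτ | ⟨n, hn⟩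
    exacts [mem_iUnion.2 ⟨0, hG, Or.inr hfτ⟩, mem_iUnion.2 ⟨n, hG, Or.inl hn⟩]
  calc ENNReal.ofReal c * P {ω | c < supUpTo f τ ω ∧ supUpTo g τ ω < c}
      ≤ ⨆ n, ENNReal.ofReal c * P (A n) := by
        rw [← ENNReal.mul_iSup, ← hA_mono.measure_iUnion]
        exact mul_le_mul_right (measure_mono hA_cover) _
    _ ≤ _ := iSup_le fun n => ofReal_mul_measure_le_lintegral_min_supUpTo hg hg_cont hτ hb hdom
        (hρ n) (fun ω h => (hρf n ω h).le) (hA_meas n) fun ω hω =>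
          ⟨hω.1, hω.2.imp_right le_of_lt⟩

end Domination

/-- A nonnegative cadlag process `f` dominated in the sense
`E[f_τ 1_{g₀ ≤ c}] ≤ E[g_τ 1_{g₀ ≤ c}]` for all bounded stopping times `τ ≤ T` by a
nonnegative continuous process `g` satisfies
`E sup_{t ≤ τ} f_t^γ ≤ (2-γ)/(1-γ) · E sup_{t ≤ τ} g_t^γ` for `γ ∈ (0,1)`. -/
theorem sup_estimate_from_stopped_domination
    {Ω : Type*} {m0 : MeasurableSpace Ω} (P : Measure Ω) [IsProbabilityMeasure P]
    (ℱ : MeasureTheory.Filtration ℝ≥0 m0) (T : ℝ≥0∞)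
    (f g : ℝ≥0 → Ω → ℝ)
    (hf_nonneg : ∀ t ω, 0 ≤ f t ω) (hg_nonneg : ∀ t ω, 0 ≤ g t ω)
    (hf_adapted : MeasureTheory.Adapted ℱ f) (hg_adapted : MeasureTheory.Adapted ℱ g)
    -- `f` has cadlag paths
    (hf_rc : ∀ ω, ∀ t : ℝ≥0, ContinuousWithinAt (fun s => f s ω) (Set.Ici t) t)
    (hf_ll : ∀ ω, ∀ t : ℝ≥0, 0 < t →
      ∃ L : ℝ, Tendsto (fun s => f s ω) (𝓝[<] t) (𝓝 L))
    -- `g` has continuous paths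
    (hg_cont : ∀ ω, Continuous (fun t => g t ω))
    -- the domination hypothesis
    (hdom : ∀ c : ℝ, 0 < c → ∀ τ : Ω → ℝ≥0,
      MeasureTheory.IsStoppingTime ℱ (fun ω => (τ ω : WithTop ℝ≥0)) → (∃ b : ℝ≥0, ∀ ω, τ ω ≤ b) →
      (∀ ω, (τ ω : ℝ≥0∞) ≤ T) →
      (∫⁻ ω in {ω | g 0 ω ≤ c}, ENNReal.ofReal (f (τ ω) ω) ∂P)
        ≤ ∫⁻ ω in {ω | g 0 ω ≤ c}, ENNReal.ofReal (g (τ ω) ω) ∂P) :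
    ∀ τ : Ω → ℝ≥0, MeasureTheory.IsStoppingTime ℱ (fun ω => (τ ω : WithTop ℝ≥0)) → (∃ b : ℝ≥0, ∀ ω, τ ω ≤ b) →
      (∀ ω, (τ ω : ℝ≥0∞) ≤ T) →
      ∀ γ : ℝ, 0 < γ → γ < 1 →
        (∫⁻ ω, ENNReal.ofReal (⨆ t : Set.Icc (0 : ℝ≥0) (τ ω), f t ω ^ γ) ∂P)
          ≤ ENNReal.ofReal ((2 - γ) / (1 - γ)) *
            ∫⁻ ω, ENNReal.ofReal (⨆ t : Set.Icc (0 : ℝ≥0) (τ ω), g t ω ^ γ) ∂P := by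
  intro τ hτ ⟨b, hb⟩ hτT γ hγ0 hγ1
  have hf_bdd := fun ω => bddAbove_range_Icc_of_cadlag (hf_rc ω) (hf_ll ω) (τ ω)
  have hg_bdd := fun ω => bddAbove_range_Icc_of_continuous (hg_cont ω) (τ ω)
  have hτm := hτ.measurable_of_coe
  simp_rw [← supUpTo_rpow (hf_nonneg · _) (hf_bdd _) hγ0,
    ← supUpTo_rpow (hg_nonneg · _) (hg_bdd _) hγ0]
  refine lintegral_rpow_le_of_mul_measure_le_lintegral_min
    (fun ω => (hf_nonneg _ ω).trans (le_supUpTo (hf_bdd ω) le_rfl))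
    (fun ω => (hg_nonneg _ ω).trans (le_supUpTo (hg_bdd ω) le_rfl))
    (measurable_supUpTo hf_rc hf_bdd (fun t => (hf_adapted t).mono (ℱ.le t) le_rfl) hτm)
    (measurable_supUpTo (fun ω t => (hg_cont ω).continuousWithinAt) hg_bdd
      (fun t => (hg_adapted t).mono (ℱ.le t) le_rfl) hτm) hγ0 hγ1 fun c hc => ?_
  exact ofReal_mul_measure_lt_supUpTo_and_supUpTo_lt_le hf_adapted hg_adapted hf_rc hf_bdd
    hg_cont hτ hb fun π hπ hπτ => hdom c hc π hπ ⟨b, fun ω => (hπτ ω).trans (hb ω)⟩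
      fun ω => (ENNReal.coe_le_coe.2 (hπτ ω)).trans (hτT ω)
end
end

section
/- Let V be a reflexive real Banach space continuously and densely embedded into a real Banach space U, and let T > 0. Let f : [0,T] → U be weakly cadlag and assume that the weak limit in U of f(s) as s ↑ T equals f(T). Assume there is a dense subset S of [0,T] such that f(s) ∈ V for every s ∈ S and sup_{s ∈ S} |f(s)|_V < ∞. Then f(t) ∈ V for every t ∈ [0,T], f is cadlag as a V-valued function with respect to the weak topology of V, and sup_{t ∈ [0,T]} |f(t)|_V = sup_{s ∈ S} |f(s)|_V. -/
open Filter Set Topology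
noncomputable section

/-- Functionals of the form `φ ∘ e` are dense in the dual of a reflexive space `V`,
when `e : V → U` is an injective continuous linear map. -/
lemma dual_comp_dense
    {V U : Type*}
    [NormedAddCommGroup V] [NormedSpace ℝ V]
    [NormedAddCommGroup U] [NormedSpace ℝ U]
    (hrefl : Function.Surjective (NormedSpace.inclusionInDoubleDual ℝ V))
    (e : V →L[ℝ] U) (he : Function.Injective e)
    (ψ : V →L[ℝ] ℝ) {ε : ℝ} (hε : 0 < ε) :
    ∃ φ : U →L[ℝ] ℝ, ‖ψ - φ.comp e‖ < ε := by
  set A : (U →L[ℝ] ℝ) →ₗ[ℝ] (V →L[ℝ] ℝ) :=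
    { toFun := fun φ => φ.comp e
      map_add' := fun φ₁ φ₂ => by ext x; simp
      map_smul' := fun c φ => by ext x; simp } with hA
  set D : Set (V →L[ℝ] ℝ) := ↑(LinearMap.range A) with hD
  have hdense : ∀ χ : V →L[ℝ] ℝ, χ ∈ closure D := by
    intro χ
    by_contra hχ
    have hconv : Convex ℝ (closure D) := by
      refine Convex.closure ?_
      intro x hx y hy a b _ _ _
      exact (LinearMap.range A).add_mem ((LinearMap.range A).smul_mem _ hx)
        ((LinearMap.range A).smul_mem _ hy)
    obtain ⟨Ξ, u0, hlt, hu⟩ :=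
      geometric_hahn_banach_closed_point hconv isClosed_closure hχ
    have hzero : ∀ φ : U →L[ℝ] ℝ, Ξ (φ.comp e) = 0 := by
      intro φ
      by_contra hne
      have hx : ∀ c : ℝ, c * Ξ (φ.comp e) < u0 := by
        intro c
        have hmem : c • (φ.comp e) ∈ closure D :=
          subset_closure ⟨c • φ, by rw [map_smul]; rfl⟩
        simpa using hlt _ hmem
      have := hx ((u0 + 1) / Ξ (φ.comp e))
      rw [div_mul_cancel₀ _ hne] at this
      linarith
    obtain ⟨v, hv⟩ := hrefl Ξ
    have hvd : ∀ φ : U →L[ℝ] ℝ, φ (e v) = 0 := by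
      intro φ
      have h1 := hzero φ
      rw [← hv] at h1
      simpa [NormedSpace.dual_def] using h1
    have hev0 : e v = 0 := NormedSpace.eq_zero_of_forall_dual_eq_zero ℝ hvd
    have hv0 : v = 0 := he (by simpa using hev0)
    have hΞ0 : Ξ = 0 := by rw [← hv, hv0]; simp
    have h0mem : (0 : V →L[ℝ] ℝ) ∈ closure D := subset_closure ⟨0, map_zero A⟩
    have h1 := hlt 0 h0mem
    rw [hΞ0] at h1 hu
    simp at h1 hu
    linarith
  obtain ⟨χ, hχD, hd⟩ := Metric.mem_closure_iff.mp (hdense ψ) ε hε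
  obtain ⟨φ, rfl⟩ := hχD
  exact ⟨φ, by rwa [dist_eq_norm] at hd⟩

/-- Workhorse: a bounded net in `V` whose image under `e` converges weakly in `U`
has a weak limit in `V`. -/
lemma weak_limit_in_V
    {V U : Type*}
    [NormedAddCommGroup V] [NormedSpace ℝ V]
    [NormedAddCommGroup U] [NormedSpace ℝ U]
    (hrefl : Function.Surjective (NormedSpace.inclusionInDoubleDual ℝ V))
    (e : V →L[ℝ] U) (he : Function.Injective e)
    {ι : Type*} (l : Filter ι) [hl : l.NeBot]
    (h : ι → V) {C : ℝ} (hC : ∀ i, ‖h i‖ ≤ C) (u : U)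
    (hconv : ∀ φ : U →L[ℝ] ℝ, Tendsto (fun i => φ (e (h i))) l (𝓝 (φ u))) :
    ∃ v : V, e v = u ∧ ‖v‖ ≤ C ∧
      ∀ ψ : V →L[ℝ] ℝ, Tendsto (fun i => ψ (h i)) l (𝓝 (ψ v)) := by
  obtain ⟨i₀⟩ := hl.nonempty
  have hC0 : 0 ≤ C := le_trans (norm_nonneg _) (hC i₀)
  have hC1 : (0:ℝ) < C + 1 := by linarith
  have key : ∀ ψ : V →L[ℝ] ℝ, ∃ x : ℝ, Tendsto (fun i => ψ (h i)) l (𝓝 x) := by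
    intro ψ
    have hc : Cauchy (map (fun i => ψ (h i)) l) := by
      rw [Metric.cauchy_iff]
      refine ⟨Filter.map_neBot, fun ε hε => ?_⟩
      obtain ⟨φ, hφ⟩ := dual_comp_dense hrefl e he ψ
        (show (0:ℝ) < ε / (5 * (C + 1)) by positivity)
      have hnear : ∀ k, |ψ (h k) - φ (e (h k))| ≤ ε / 5 := by
        intro k
        have h1 : |ψ (h k) - φ (e (h k))| = ‖(ψ - φ.comp e) (h k)‖ := by
          simp [Real.norm_eq_abs]
        rw [h1]
        calc ‖(ψ - φ.comp e) (h k)‖ ≤ ‖ψ - φ.comp e‖ * ‖h k‖ :=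
              ContinuousLinearMap.le_opNorm _ _
          _ ≤ (ε / (5 * (C + 1))) * (C + 1) := by
              apply mul_le_mul hφ.le ((hC k).trans (by linarith)) (norm_nonneg _)
              positivity
          _ = ε / 5 := by field_simp
      have hev : ∀ᶠ i in l, |φ (e (h i)) - φ u| < ε / 5 := by
        have := Metric.tendsto_nhds.mp (hconv φ) (ε / 5) (by positivity)
        simpa [Real.dist_eq] using this
      refine ⟨(fun i => ψ (h i)) '' {i | |φ (e (h i)) - φ u| < ε / 5},
        image_mem_map hev, ?_⟩
      rintro x ⟨i, hi, rfl⟩ y ⟨j, hj, rfl⟩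
      simp only [mem_setOf_eq] at hi hj
      have t1 := hnear i
      have t2 := hnear j
      rw [Real.dist_eq]
      have habs : |ψ (h i) - ψ (h j)| ≤
          |ψ (h i) - φ (e (h i))| + |φ (e (h i)) - φ u| +
          |φ u - φ (e (h j))| + |φ (e (h j)) - ψ (h j)| := by
        linarith [abs_sub_le (ψ (h i)) (φ (e (h i))) (φ u),
          abs_sub_le (ψ (h i)) (φ u) (ψ (h j)),
          abs_sub_le (φ u) (φ (e (h j))) (ψ (h j))]
      have hj' : |φ u - φ (e (h j))| < ε / 5 := by rwa [abs_sub_comm]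
      have t2' : |φ (e (h j)) - ψ (h j)| ≤ ε / 5 := by rwa [abs_sub_comm]
      linarith
    obtain ⟨x, hx⟩ := CompleteSpace.complete hc
    exact ⟨x, hx⟩
  choose Λ hΛ using key
  have hbound : ∀ ψ : V →L[ℝ] ℝ, |Λ ψ| ≤ C * ‖ψ‖ := by
    intro ψ
    refine le_of_tendsto (hΛ ψ).abs (Eventually.of_forall fun i => ?_)
    calc |ψ (h i)| = ‖ψ (h i)‖ := (Real.norm_eq_abs _).symm
      _ ≤ ‖ψ‖ * ‖h i‖ := ContinuousLinearMap.le_opNorm _ _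
      _ ≤ ‖ψ‖ * C := mul_le_mul_of_nonneg_left (hC i) (norm_nonneg _)
      _ = C * ‖ψ‖ := mul_comm _ _
  set Λlin : StrongDual ℝ (StrongDual ℝ V) := LinearMap.mkContinuous
    { toFun := Λ
      map_add' := fun ψ₁ ψ₂ => tendsto_nhds_unique (hΛ (ψ₁ + ψ₂))
        (by simpa using (hΛ ψ₁).add (hΛ ψ₂))
      map_smul' := fun c ψ => tendsto_nhds_unique (hΛ (c • ψ))
        (by simpa [smul_eq_mul] using (hΛ ψ).const_mul c) }
    C (fun ψ => by simpa [Real.norm_eq_abs] using hbound ψ) with hΛlin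
  obtain ⟨v, hv⟩ := hrefl Λlin
  have hψv : ∀ ψ : V →L[ℝ] ℝ, ψ v = Λ ψ := by
    intro ψ
    have h1 := congrArg (fun Ξ : StrongDual ℝ (StrongDual ℝ V) => Ξ ψ) hv
    simpa [NormedSpace.dual_def, hΛlin] using h1
  have htend : ∀ ψ : V →L[ℝ] ℝ, Tendsto (fun i => ψ (h i)) l (𝓝 (ψ v)) := by
    intro ψ; rw [hψv ψ]; exact hΛ ψ
  have hev : e v = u := by
    rw [NormedSpace.eq_iff_forall_dual_eq ℝ]
    intro φ
    exact tendsto_nhds_unique (htend (φ.comp e)) (hconv φ)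
  refine ⟨v, hev, ?_, htend⟩
  refine NormedSpace.norm_le_dual_bound ℝ v hC0 fun ψ => ?_
  rw [hψv ψ, Real.norm_eq_abs]
  exact hbound ψ

/-- A weakly cadlag `U`-valued function which takes values in a reflexive space `V`,
densely and continuously embedded in `U`, on a dense set of times with bounded `V`-norms,
is a `V`-valued function which is cadlag in the weak topology of `V`, and its `V`-norm
supremum over `[0,T]` equals the supremem over the dense set. -/
theorem weakly_cadlag_in_V
    (V U : Type*)
    [NormedAddCommGroup V] [NormedSpace ℝ V] [CompleteSpace V]
    [NormedAddCommGroup U] [NormedSpace ℝ U] [CompleteSpace U]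
    -- V is reflexive
    (hrefl : Function.Surjective (NormedSpace.inclusionInDoubleDual ℝ V))
    -- continuous dense embedding of V into U
    (e : V →L[ℝ] U) (he : Function.Injective e) (hdense : DenseRange e)
    (T : ℝ) (hT : 0 < T) (f : ℝ → U)
    -- f is weakly right-continuous on [0,T)
    (hrc : ∀ t ∈ Set.Ico 0 T, ∀ φ : U →L[ℝ] ℝ,
      Tendsto (fun s => φ (f s)) (𝓝[Set.Ioc t T] t) (𝓝 (φ (f t))))
    -- f has weak left limits on (0,T]
    (hll : ∀ t ∈ Set.Ioc 0 T, ∃ L : U, ∀ φ : U →L[ℝ] ℝ,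
      Tendsto (fun s => φ (f s)) (𝓝[Set.Ico 0 t] t) (𝓝 (φ L)))
    -- the weak left limit at T equals f(T)
    (hlT : ∀ φ : U →L[ℝ] ℝ,
      Tendsto (fun s => φ (f s)) (𝓝[Set.Ico 0 T] T) (𝓝 (φ (f T))))
    -- S is a dense subset of [0,T] on which f takes values in V with bounded V-norm
    (S : Set ℝ) (hS : S ⊆ Set.Icc 0 T) (hSdense : Set.Icc 0 T ⊆ closure S)
    (g₀ : S → V) (hg₀ : ∀ s : S, e (g₀ s) = f s)
    (hbdd : ∃ C : ℝ, ∀ s : S, ‖g₀ s‖ ≤ C) :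
    ∃ g : ℝ → V,
      (∀ t ∈ Set.Icc 0 T, e (g t) = f t) ∧
      -- g is weakly right-continuous on [0,T)
      (∀ t ∈ Set.Ico 0 T, ∀ ψ : V →L[ℝ] ℝ,
        Tendsto (fun s => ψ (g s)) (𝓝[Set.Ioc t T] t) (𝓝 (ψ (g t)))) ∧
      -- g has weak left limits in V on (0,T]
      (∀ t ∈ Set.Ioc 0 T, ∃ L : V, ∀ ψ : V →L[ℝ] ℝ,
        Tendsto (fun s => ψ (g s)) (𝓝[Set.Ico 0 t] t) (𝓝 (ψ L))) ∧
      (⨆ t : Set.Icc (0:ℝ) T, ‖g t‖) = ⨆ s : S, ‖g₀ s‖ := by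
  classical
  obtain ⟨C, hCb⟩ := hbdd
  haveI hSne : Nonempty S := by
    have h0 : (0:ℝ) ∈ closure S := hSdense ⟨le_refl 0, hT.le⟩
    obtain ⟨s, hs⟩ := closure_nonempty_iff.mp ⟨0, h0⟩
    exact ⟨⟨s, hs⟩⟩
  have hbddA : BddAbove (Set.range fun s : S => ‖g₀ s‖) := by
    refine ⟨C, ?_⟩; rintro _ ⟨s, rfl⟩; exact hCb s
  set M : ℝ := ⨆ s : S, ‖g₀ s‖ with hM
  have hMle : ∀ s : S, ‖g₀ s‖ ≤ M := fun s => le_ciSup hbddA s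
  have hM0 : 0 ≤ M := le_trans (norm_nonneg _) (hMle hSne.some)
  -- accumulation of `S` at points of `[0,T]`
  have haux_r : ∀ t ∈ Ico 0 T, t ∈ closure (S ∩ Ioc t T) := by
    intro t ht
    rw [Metric.mem_closure_iff]
    intro ε hε
    have hδ : 0 < min ε (T - t) := lt_min hε (by linarith [ht.2])
    set δ := min ε (T - t) with hδdef
    have hδε : δ ≤ ε := min_le_left _ _
    have hδT : δ ≤ T - t := min_le_right _ _
    have hmid : t + δ/2 ∈ Icc 0 T := ⟨by linarith [ht.1], by linarith⟩
    obtain ⟨s, hsS, hs⟩ := Metric.mem_closure_iff.mp (hSdense hmid) (δ/4) (by positivity)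
    rw [Real.dist_eq, abs_lt] at hs
    refine ⟨s, ⟨hsS, ⟨by linarith, by linarith⟩⟩, ?_⟩
    rw [Real.dist_eq, abs_lt]
    constructor <;> linarith
  have haux_l : T ∈ closure (S ∩ Ico 0 T) := by
    rw [Metric.mem_closure_iff]
    intro ε hε
    have hδ : 0 < min ε T := lt_min hε hT
    set δ := min ε T with hδdef
    have hδε : δ ≤ ε := min_le_left _ _
    have hδT : δ ≤ T := min_le_right _ _
    have hmid : T - δ/2 ∈ Icc 0 T := ⟨by linarith, by linarith⟩
    obtain ⟨s, hsS, hs⟩ := Metric.mem_closure_iff.mp (hSdense hmid) (δ/4) (by positivity)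
    rw [Real.dist_eq, abs_lt] at hs
    refine ⟨s, ⟨hsS, ⟨by linarith, by linarith⟩⟩, ?_⟩
    rw [Real.dist_eq, abs_lt]
    constructor <;> linarith
  -- existence of `V`-valued representatives at every time
  have hex : ∀ t ∈ Icc 0 T, ∃ v : V, e v = f t ∧ ‖v‖ ≤ M := by
    intro t ht
    rcases eq_or_lt_of_le ht.2 with heq | hlt
    · -- t = T
      subst heq
      set F := 𝓝[S ∩ Ico 0 t] t with hF
      haveI hFne : F.NeBot := mem_closure_iff_nhdsWithin_neBot.mp haux_l
      set l : Filter S := comap (Subtype.val) F with hldef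
      haveI : l.NeBot := by
        rw [hldef, comap_neBot_iff]
        intro A hA
        obtain ⟨x, hxA, hxS, _⟩ :=
          Filter.nonempty_of_mem (F.inter_mem hA self_mem_nhdsWithin)
        exact ⟨⟨x, hxS⟩, hxA⟩
      have hval : Tendsto (Subtype.val : S → ℝ) l (𝓝[Ico 0 t] t) :=
        tendsto_comap.mono_right (nhdsWithin_mono _ inter_subset_right)
      have hconv : ∀ φ : U →L[ℝ] ℝ,
          Tendsto (fun s : S => φ (e (g₀ s))) l (𝓝 (φ (f t))) := by
        intro φ
        have h1 : Tendsto (fun s : S => φ (f ↑s)) l (𝓝 (φ (f t))) := (hlT φ).comp hval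
        exact h1.congr fun s => by rw [hg₀ s]
      obtain ⟨v, hv1, hv2, _⟩ := weak_limit_in_V hrefl e he l g₀ hMle (f t) hconv
      exact ⟨v, hv1, hv2⟩
    · -- t < T
      set F := 𝓝[S ∩ Ioc t T] t with hF
      haveI hFne : F.NeBot := mem_closure_iff_nhdsWithin_neBot.mp (haux_r t ⟨ht.1, hlt⟩)
      set l : Filter S := comap (Subtype.val) F with hldef
      haveI : l.NeBot := by
        rw [hldef, comap_neBot_iff]
        intro A hA
        obtain ⟨x, hxA, hxS, _⟩ :=
          Filter.nonempty_of_mem (F.inter_mem hA self_mem_nhdsWithin)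
        exact ⟨⟨x, hxS⟩, hxA⟩
      have hval : Tendsto (Subtype.val : S → ℝ) l (𝓝[Ioc t T] t) :=
        tendsto_comap.mono_right (nhdsWithin_mono _ inter_subset_right)
      have hconv : ∀ φ : U →L[ℝ] ℝ,
          Tendsto (fun s : S => φ (e (g₀ s))) l (𝓝 (φ (f t))) := by
        intro φ
        have h1 : Tendsto (fun s : S => φ (f ↑s)) l (𝓝 (φ (f t))) :=
          (hrc t ⟨ht.1, hlt⟩ φ).comp hval
        exact h1.congr fun s => by rw [hg₀ s]
      obtain ⟨v, hv1, hv2, _⟩ := weak_limit_in_V hrefl e he l g₀ hMle (f t) hconv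
      exact ⟨v, hv1, hv2⟩
  set g : ℝ → V := fun t => if h : t ∈ Icc 0 T then (hex t h).choose else 0 with hgdef
  have hg1 : ∀ t ∈ Icc 0 T, e (g t) = f t := by
    intro t ht
    simp only [hgdef, dif_pos ht]
    exact (hex t ht).choose_spec.1
  have hgM : ∀ t : ℝ, ‖g t‖ ≤ M := by
    intro t
    by_cases ht : t ∈ Icc 0 T
    · simp only [hgdef, dif_pos ht]; exact (hex t ht).choose_spec.2
    · simp only [hgdef, dif_neg ht, norm_zero]; exact hM0
  -- right-continuity in the weak topology of V
  have hgrc : ∀ t ∈ Ico 0 T, ∀ ψ : V →L[ℝ] ℝ,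
      Tendsto (fun s => ψ (g s)) (𝓝[Ioc t T] t) (𝓝 (ψ (g t))) := by
    intro t ht ψ
    haveI : (𝓝[Ioc t T] t).NeBot := mem_closure_iff_nhdsWithin_neBot.mp
      (by rw [closure_Ioc (ne_of_lt ht.2)]; exact ⟨le_refl t, ht.2.le⟩)
    have hconv : ∀ φ : U →L[ℝ] ℝ,
        Tendsto (fun s => φ (e (g s))) (𝓝[Ioc t T] t) (𝓝 (φ (f t))) := by
      intro φ
      refine Tendsto.congr' ?_ (hrc t ht φ)
      filter_upwards [eventually_mem_nhdsWithin] with s hs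
      rw [hg1 s ⟨le_trans ht.1 hs.1.le, hs.2⟩]
    obtain ⟨v, hv1, _, htd⟩ :=
      weak_limit_in_V hrefl e he (𝓝[Ioc t T] t) g hgM (f t) hconv
    have hvg : v = g t := he (hv1.trans (hg1 t ⟨ht.1, ht.2.le⟩).symm)
    rw [← hvg]
    exact htd ψ
  -- weak left limits in V
  have hgll : ∀ t ∈ Ioc 0 T, ∃ L : V, ∀ ψ : V →L[ℝ] ℝ,
      Tendsto (fun s => ψ (g s)) (𝓝[Ico 0 t] t) (𝓝 (ψ L)) := by
    intro t ht
    obtain ⟨L, hL⟩ := hll t ht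
    haveI : (𝓝[Ico 0 t] t).NeBot := mem_closure_iff_nhdsWithin_neBot.mp
      (by rw [closure_Ico ht.1.ne]; exact ⟨ht.1.le, le_refl t⟩)
    have hconv : ∀ φ : U →L[ℝ] ℝ,
        Tendsto (fun s => φ (e (g s))) (𝓝[Ico 0 t] t) (𝓝 (φ L)) := by
      intro φ
      refine Tendsto.congr' ?_ (hL φ)
      filter_upwards [eventually_mem_nhdsWithin] with s hs
      rw [hg1 s ⟨hs.1, hs.2.le.trans ht.2⟩]
    obtain ⟨LV, _, _, htd⟩ :=
      weak_limit_in_V hrefl e he (𝓝[Ico 0 t] t) g hgM L hconv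
    exact ⟨LV, htd⟩
  refine ⟨g, hg1, hgrc, hgll, ?_⟩
  have hgS : ∀ s : S, g ↑s = g₀ s := fun s =>
    he ((hg1 ↑s (hS s.2)).trans (hg₀ s).symm)
  haveI : Nonempty (Icc (0:ℝ) T) := ⟨⟨0, le_refl 0, hT.le⟩⟩
  apply le_antisymm
  · exact ciSup_le fun t => hgM t
  · refine ciSup_le fun s => ?_
    rw [← hgS s]
    exact le_ciSup (f := fun t : Icc (0:ℝ) T => ‖g ↑t‖)
      ⟨M, by rintro _ ⟨t, rfl⟩; exact hgM t⟩ (⟨↑s, hS s.2⟩ : Icc (0:ℝ) T)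
end
end

section
/- Let η : ℝ^d → ℝ^d be continuously differentiable with |η(x)| ≤ K and |Dη(x)| ≤ K for all x ∈ ℝ^d, for some constant K. Define, for a continuously differentiable function v on ℝ^d, 𝒥^k v(x) := ∫₀¹ η^k(x) ( v(x + θη(x)) − v(x) ) dθ for k = 1, …, d, and 𝒥^0 v(x) := −∫₀¹ [ Σ_{k=1}^d D_kη^k(x) ( v(x + θη(x)) − v(x) ) + θ Σ_{k,l=1}^d η^k(x) D_kη^l(x) D_lv(x + θη(x)) ] dθ. Then for all smooth compactly supported v, φ : ℝ^d → ℝ one has ∫_{ℝ^d} ( v(x + η(x)) − v(x) − η(x)·∇v(x) ) φ(x) dx = −Σ_{k=1}^d ∫_{ℝ^d} 𝒥^k v(x) D_kφ(x) dx + ∫_{ℝ^d} 𝒥^0 v(x) φ(x) dx. -/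
open MeasureTheory Filter Finset
noncomputable section

/-- `𝒥^k v(x) = ∫₀¹ η^k(x)(v(x+θη(x)) - v(x)) dθ` for `k = 1,…,d`. -/
def Jk (d : ℕ) (η : Euc d → Euc d) (k : Fin d) (v : Euc d → ℝ) (x : Euc d) : ℝ :=
  ∫ θ in (0:ℝ)..1, η x k * (v (x + θ • η x) - v x)

/-- `𝒥^0 v(x) = -∫₀¹ [Σₖ D_kη^k(x)(v(x+θη(x)) - v(x))
+ θ Σₖₗ η^k(x) D_kη^l(x) D_lv(x+θη(x))] dθ`. -/
def J0 (d : ℕ) (η : Euc d → Euc d) (v : Euc d → ℝ) (x : Euc d) : ℝ :=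
  -∫ θ in (0:ℝ)..1,
    ((∑ k : Fin d, fderiv ℝ η x (EuclideanSpace.single k 1) k) * (v (x + θ • η x) - v x) +
      θ * ∑ k : Fin d, ∑ l : Fin d,
        η x k * fderiv ℝ η x (EuclideanSpace.single k 1) l *
          fderiv ℝ v (x + θ • η x) (EuclideanSpace.single l 1))

lemma euc_sum {d : ℕ} (w : Euc d) :
    w = ∑ l : Fin d, w l • (EuclideanSpace.single l 1 : Euc d) := by
  ext j
  rw [WithLp.ofLp_sum, Finset.sum_apply]
  simp [EuclideanSpace.single_apply]

lemma clm_decomp {d : ℕ} (L : Euc d →L[ℝ] ℝ) (w : Euc d) :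
    L w = ∑ l : Fin d, w l * L (EuclideanSpace.single l 1) := by
  conv_lhs => rw [euc_sum w]
  rw [map_sum]
  simp [smul_eq_mul]

section Aux
variable {d : ℕ} {η : Euc d → Euc d} {v φ : Euc d → ℝ}

lemma hasFDerivAt_shift (hη : ContDiff ℝ 1 η) (θ : ℝ) (x : Euc d) :
    HasFDerivAt (fun x => x + θ • η x)
      (ContinuousLinearMap.id ℝ (Euc d) + θ • fderiv ℝ η x) x :=
  (hasFDerivAt_id x).add (((hη.differentiable one_ne_zero x).hasFDerivAt).const_smul θ)

lemma hasFDerivAt_comp_shift (hη : ContDiff ℝ 1 η) (hv : ContDiff ℝ (⊤ : ℕ∞) v) (θ : ℝ) (x : Euc d) :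
    HasFDerivAt (fun x => v (x + θ • η x))
      ((fderiv ℝ v (x + θ • η x)).comp
        (ContinuousLinearMap.id ℝ (Euc d) + θ • fderiv ℝ η x)) x :=
  ((hv.differentiable (by simp) _).hasFDerivAt).comp x (hasFDerivAt_shift hη θ x)

lemma hasFDerivAt_Fk (hη : ContDiff ℝ 1 η) (hv : ContDiff ℝ (⊤ : ℕ∞) v) (θ : ℝ) (k : Fin d) (x : Euc d) :
    HasFDerivAt (fun x => η x k * (v (x + θ • η x) - v x))
      ((η x k) • (((fderiv ℝ v (x + θ • η x)).comp
          (ContinuousLinearMap.id ℝ (Euc d) + θ • fderiv ℝ η x)) - fderiv ℝ v x)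
        + (v (x + θ • η x) - v x) • ((EuclideanSpace.proj k).comp (fderiv ℝ η x))) x := by
  have h1 : HasFDerivAt (fun x => η x k)
      ((EuclideanSpace.proj k).comp (fderiv ℝ η x)) x :=
    ((EuclideanSpace.proj k).hasFDerivAt.comp x
      (hη.differentiable one_ne_zero x).hasFDerivAt).congr_of_eventuallyEq
      (Filter.Eventually.of_forall fun y => by simp)
  exact h1.mul ((hasFDerivAt_comp_shift hη hv θ x).sub (hv.differentiable (by simp) x).hasFDerivAt)

lemma fderiv_Fk (hη : ContDiff ℝ 1 η) (hv : ContDiff ℝ (⊤ : ℕ∞) v) (θ : ℝ) (k : Fin d) (x : Euc d) :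
    fderiv ℝ (fun x => η x k * (v (x + θ • η x) - v x)) x (EuclideanSpace.single k 1)
    = fderiv ℝ η x (EuclideanSpace.single k 1) k * (v (x + θ • η x) - v x)
      + η x k * (fderiv ℝ v (x + θ • η x) (EuclideanSpace.single k 1)
          + θ * fderiv ℝ v (x + θ • η x) (fderiv ℝ η x (EuclideanSpace.single k 1))
          - fderiv ℝ v x (EuclideanSpace.single k 1)) := by
  rw [(hasFDerivAt_Fk hη hv θ k x).fderiv]
  simp [ContinuousLinearMap.smul_apply, ContinuousLinearMap.add_apply,
    ContinuousLinearMap.comp_apply, ContinuousLinearMap.sub_apply, smul_eq_mul,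
    mul_add, mul_sub]
  ring

lemma ftc_theta (hv : ContDiff ℝ (⊤ : ℕ∞) v) (x : Euc d) :
    v (x + η x) - v x - fderiv ℝ v x (η x)
      = ∫ θ in (0:ℝ)..1, (fderiv ℝ v (x + θ • η x) (η x) - fderiv ℝ v x (η x)) := by
  have hF : ∀ θ : ℝ, HasDerivAt (fun θ : ℝ => v (x + θ • η x))
      (fderiv ℝ v (x + θ • η x) (η x)) θ := by
    intro θ
    have h1 : HasDerivAt (fun θ : ℝ => x + θ • η x) (η x) θ := by
      simpa using ((hasDerivAt_id θ).smul_const (η x)).const_add x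
    exact ((hv.differentiable (by simp) _).hasFDerivAt).comp_hasDerivAt θ h1
  have hcont : Continuous fun θ : ℝ => fderiv ℝ v (x + θ • η x) (η x) := by
    apply Continuous.clm_apply _ continuous_const
    exact (hv.continuous_fderiv (by simp)).comp
      (continuous_const.add ((continuous_id.smul continuous_const)))
  have h2 := intervalIntegral.integral_eq_sub_of_hasDerivAt
    (f := fun θ : ℝ => v (x + θ • η x)) (fun θ _ => hF θ) (hcont.intervalIntegrable 0 1)
  rw [intervalIntegral.integral_sub (hcont.intervalIntegrable 0 1)
    (intervalIntegrable_const), h2]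
  simp

variable (hη : ContDiff ℝ 1 η) (hv : ContDiff ℝ (⊤ : ℕ∞) v)
  (hφ : ContDiff ℝ (⊤ : ℕ∞) φ) (hφs : HasCompactSupport φ)

include hη hv hφ hφs in
lemma per_theta (θ : ℝ) :
    ∫ x : Euc d, (fderiv ℝ v (x + θ • η x) (η x) - fderiv ℝ v x (η x)) * φ x
    = -(∑ k : Fin d, ∫ x : Euc d,
          (η x k * (v (x + θ • η x) - v x)) * fderiv ℝ φ x (EuclideanSpace.single k 1))
      - ∫ x : Euc d,
          ((∑ k : Fin d, fderiv ℝ η x (EuclideanSpace.single k 1) k) * (v (x + θ • η x) - v x)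
            + θ * ∑ k : Fin d, ∑ l : Fin d,
                η x k * fderiv ℝ η x (EuclideanSpace.single k 1) l *
                  fderiv ℝ v (x + θ • η x) (EuclideanSpace.single l 1)) * φ x := by
  have hηc : Continuous η := hη.continuous
  have hDη : Continuous (fderiv ℝ η) := hη.continuous_fderiv one_ne_zero
  have hvc : Continuous v := hv.continuous
  have hDv : Continuous (fderiv ℝ v) := hv.continuous_fderiv (by simp)
  have hDφ : Continuous (fderiv ℝ φ) := hφ.continuous_fderiv (by simp)
  have hψ : Continuous fun x : Euc d => x + θ • η x :=
    continuous_id.add (hηc.const_smul θ)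
  have hvψ : Continuous fun x : Euc d => v (x + θ • η x) := hvc.comp hψ
  have hηk : ∀ k : Fin d, Continuous fun x : Euc d => η x k :=
    fun k => (PiLp.continuous_apply (p := 2) (β := fun _ : Fin d => ℝ) k).comp hηc
  have hDηk : ∀ (k l : Fin d), Continuous fun x : Euc d =>
      fderiv ℝ η x (EuclideanSpace.single k 1) l :=
    fun k l => (PiLp.continuous_apply (p := 2) (β := fun _ : Fin d => ℝ) l).comp (hDη.clm_apply continuous_const)
  have hDvψ : ∀ l : Fin d, Continuous fun x : Euc d =>
      fderiv ℝ v (x + θ • η x) (EuclideanSpace.single l 1) :=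
    fun l => (hDv.comp hψ).clm_apply continuous_const
  have hFkc : ∀ k : Fin d, Continuous fun x : Euc d => η x k * (v (x + θ • η x) - v x) :=
    fun k => (hηk k).mul (hvψ.sub hvc)
  have hDFkc : ∀ k : Fin d, Continuous fun x : Euc d =>
      fderiv ℝ η x (EuclideanSpace.single k 1) k * (v (x + θ • η x) - v x)
      + η x k * (fderiv ℝ v (x + θ • η x) (EuclideanSpace.single k 1)
          + θ * fderiv ℝ v (x + θ • η x) (fderiv ℝ η x (EuclideanSpace.single k 1))
          - fderiv ℝ v x (EuclideanSpace.single k 1)) := by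
    intro k
    apply ((hDηk k k).mul (hvψ.sub hvc)).add
    apply (hηk k).mul
    apply Continuous.sub
    · exact (hDvψ k).add (continuous_const.mul
        ((hDv.comp hψ).clm_apply (hDη.clm_apply continuous_const)))
    · exact hDv.clm_apply continuous_const
  have hφDk : ∀ k : Fin d, HasCompactSupport fun x : Euc d =>
      fderiv ℝ φ x (EuclideanSpace.single k 1) := by
    intro k
    exact (hφs.fderiv ℝ).comp_left (g := fun L : Euc d →L[ℝ] ℝ => L (EuclideanSpace.single k 1))
      rfl
  have hmulφ : ∀ f : Euc d → ℝ, HasCompactSupport fun x => f x * φ x :=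
    fun f => HasCompactSupport.mul_left hφs
  have hmulDφ : ∀ (f : Euc d → ℝ) (k : Fin d),
      HasCompactSupport fun x => f x * fderiv ℝ φ x (EuclideanSpace.single k 1) :=
    fun f k => HasCompactSupport.mul_left (hφDk k)
  have ibp : ∀ k : Fin d,
      ∫ x : Euc d, (η x k * (v (x + θ • η x) - v x)) * fderiv ℝ φ x (EuclideanSpace.single k 1)
      = -∫ x : Euc d, (fderiv ℝ η x (EuclideanSpace.single k 1) k * (v (x + θ • η x) - v x)
          + η x k * (fderiv ℝ v (x + θ • η x) (EuclideanSpace.single k 1)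
              + θ * fderiv ℝ v (x + θ • η x) (fderiv ℝ η x (EuclideanSpace.single k 1))
              - fderiv ℝ v x (EuclideanSpace.single k 1))) * φ x := by
    intro k
    have hfd : Differentiable ℝ fun x : Euc d => η x k * (v (x + θ • η x) - v x) :=
      fun x => (hasFDerivAt_Fk hη hv θ k x).differentiableAt
    have h := integral_mul_fderiv_eq_neg_fderiv_mul_of_integrable
      (μ := (volume : Measure (Euc d)))
      (f := fun x : Euc d => η x k * (v (x + θ • η x) - v x)) (g := φ)
      (v := EuclideanSpace.single k 1)
      ?_ ?_ ?_ (fun x _ => hfd x) (fun x _ => hφ.differentiable (by simp) x)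
    · refine h.trans ?_
      congr 1
      exact integral_congr_ae (Filter.Eventually.of_forall fun x => by
        beta_reduce
        rw [fderiv_Fk hη hv θ k x])
    · have : (fun x : Euc d => fderiv ℝ (fun x => η x k * (v (x + θ • η x) - v x)) x
          (EuclideanSpace.single k 1) * φ x)
          = fun x : Euc d => (fderiv ℝ η x (EuclideanSpace.single k 1) k * (v (x + θ • η x) - v x)
          + η x k * (fderiv ℝ v (x + θ • η x) (EuclideanSpace.single k 1)
              + θ * fderiv ℝ v (x + θ • η x) (fderiv ℝ η x (EuclideanSpace.single k 1))
              - fderiv ℝ v x (EuclideanSpace.single k 1))) * φ x := by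
        funext x; rw [fderiv_Fk hη hv θ k x]
      rw [this]
      exact ((hDFkc k).mul hφ.continuous).integrable_of_hasCompactSupport (hmulφ _)
    · exact (((hFkc k).mul (hDφ.clm_apply continuous_const))).integrable_of_hasCompactSupport
        (hmulDφ _ k)
    · exact ((hFkc k).mul hφ.continuous).integrable_of_hasCompactSupport (hmulφ _)
  have halg : ∀ x : Euc d,
      ∑ k : Fin d, (fderiv ℝ η x (EuclideanSpace.single k 1) k * (v (x + θ • η x) - v x)
        + η x k * (fderiv ℝ v (x + θ • η x) (EuclideanSpace.single k 1)
            + θ * fderiv ℝ v (x + θ • η x) (fderiv ℝ η x (EuclideanSpace.single k 1))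
            - fderiv ℝ v x (EuclideanSpace.single k 1)))
      = (fderiv ℝ v (x + θ • η x) (η x) - fderiv ℝ v x (η x))
        + ((∑ k : Fin d, fderiv ℝ η x (EuclideanSpace.single k 1) k) * (v (x + θ • η x) - v x)
          + θ * ∑ k : Fin d, ∑ l : Fin d,
              η x k * fderiv ℝ η x (EuclideanSpace.single k 1) l *
                fderiv ℝ v (x + θ • η x) (EuclideanSpace.single l 1)) := by
    intro x
    rw [clm_decomp (fderiv ℝ v (x + θ • η x)) (η x), clm_decomp (fderiv ℝ v x) (η x)]
    conv_lhs =>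
      enter [2, k]
      rw [clm_decomp (fderiv ℝ v (x + θ • η x)) (fderiv ℝ η x (EuclideanSpace.single k 1))]
    simp only [Finset.mul_sum, Finset.sum_mul, mul_add, add_mul, mul_sub, sub_mul,
      Finset.sum_add_distrib, Finset.sum_sub_distrib]
    ring_nf
    congr 1
    simp only [mul_comm, mul_left_comm, mul_assoc]
    ring
  have hG1c : Continuous fun x : Euc d =>
      (fderiv ℝ v (x + θ • η x) (η x) - fderiv ℝ v x (η x)) * φ x :=
    (((hDv.comp hψ).clm_apply hηc).sub (hDv.clm_apply hηc)).mul hφ.continuous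
  have hG3c : Continuous fun x : Euc d =>
      ((∑ k : Fin d, fderiv ℝ η x (EuclideanSpace.single k 1) k) * (v (x + θ • η x) - v x)
        + θ * ∑ k : Fin d, ∑ l : Fin d,
            η x k * fderiv ℝ η x (EuclideanSpace.single k 1) l *
              fderiv ℝ v (x + θ • η x) (EuclideanSpace.single l 1)) * φ x := by
    apply Continuous.mul _ hφ.continuous
    apply Continuous.add
    · exact (continuous_finset_sum _ fun k _ => hDηk k k).mul (hvψ.sub hvc)
    · exact continuous_const.mul (continuous_finset_sum _ fun k _ =>
        continuous_finset_sum _ fun l _ => ((hηk k).mul (hDηk k l)).mul (hDvψ l))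
  have hG1i : Integrable (fun x : Euc d =>
      (fderiv ℝ v (x + θ • η x) (η x) - fderiv ℝ v x (η x)) * φ x) :=
    hG1c.integrable_of_hasCompactSupport (hmulφ _)
  have hG3i : Integrable (fun x : Euc d =>
      ((∑ k : Fin d, fderiv ℝ η x (EuclideanSpace.single k 1) k) * (v (x + θ • η x) - v x)
        + θ * ∑ k : Fin d, ∑ l : Fin d,
            η x k * fderiv ℝ η x (EuclideanSpace.single k 1) l *
              fderiv ℝ v (x + θ • η x) (EuclideanSpace.single l 1)) * φ x) :=
    hG3c.integrable_of_hasCompactSupport (hmulφ _)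
  have hsum : ∑ k : Fin d, ∫ x : Euc d,
      (η x k * (v (x + θ • η x) - v x)) * fderiv ℝ φ x (EuclideanSpace.single k 1)
      = -((∫ x : Euc d, (fderiv ℝ v (x + θ • η x) (η x) - fderiv ℝ v x (η x)) * φ x)
          + ∫ x : Euc d,
            ((∑ k : Fin d, fderiv ℝ η x (EuclideanSpace.single k 1) k) * (v (x + θ • η x) - v x)
              + θ * ∑ k : Fin d, ∑ l : Fin d,
                  η x k * fderiv ℝ η x (EuclideanSpace.single k 1) l *
                    fderiv ℝ v (x + θ • η x) (EuclideanSpace.single l 1)) * φ x) := by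
    rw [Finset.sum_congr rfl fun k _ => ibp k, Finset.sum_neg_distrib, neg_inj,
      ← integral_finset_sum _ (fun k _ =>
        ((hDFkc k).fun_mul hφ.continuous).integrable_of_hasCompactSupport (hmulφ _)),
      ← integral_add hG1i hG3i]
    apply integral_congr_ae (Filter.Eventually.of_forall fun x => ?_)
    rw [← Finset.sum_mul, halg x, add_mul]
  linarith [hsum]

end Aux

section Fubini
variable {d : ℕ}

lemma key_int (G : ℝ → Euc d → ℝ) (hG : Continuous (Function.uncurry G))
    (K : Set (Euc d)) (hK : IsCompact K) (h0 : ∀ θ x, x ∉ K → G θ x = 0) :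
    Integrable (fun p : Euc d × ℝ => G p.2 p.1)
      ((volume : Measure (Euc d)).prod (volume.restrict (Set.Ioc (0:ℝ) 1))) := by
  have hH : Continuous fun p : Euc d × ℝ => G p.2 p.1 :=
    hG.comp (continuous_snd.prodMk continuous_fst)
  have hrw : (volume : Measure (Euc d)).prod (volume.restrict (Set.Ioc (0:ℝ) 1))
      = ((volume : Measure (Euc d)).prod volume).restrict
          ((Set.univ : Set (Euc d)) ×ˢ Set.Ioc (0:ℝ) 1) := by
    rw [← Measure.prod_restrict, Measure.restrict_univ]
  rw [hrw]
  have hmeas : MeasurableSet (K ×ˢ Set.Icc (0:ℝ) 1) :=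
    (hK.isClosed.measurableSet).prod measurableSet_Icc
  have hKI : IntegrableOn (fun p : Euc d × ℝ => G p.2 p.1) (K ×ˢ Set.Icc (0:ℝ) 1)
      ((volume : Measure (Euc d)).prod volume) :=
    hH.continuousOn.integrableOn_compact (hK.prod isCompact_Icc)
  have hind : Integrable
      ((K ×ˢ Set.Icc (0:ℝ) 1).indicator fun p : Euc d × ℝ => G p.2 p.1)
      (((volume : Measure (Euc d)).prod volume).restrict
        ((Set.univ : Set (Euc d)) ×ˢ Set.Ioc (0:ℝ) 1)) :=
    ((integrable_indicator_iff hmeas).2 hKI).restrict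
  apply hind.congr
  apply Filter.eventuallyEq_of_mem
    (self_mem_ae_restrict ((MeasurableSet.univ).prod measurableSet_Ioc))
  intro p hp
  by_cases hpK : p.1 ∈ K
  · exact Set.indicator_of_mem (Set.mk_mem_prod hpK (Set.Ioc_subset_Icc_self hp.2)) _
  · rw [Set.indicator_of_notMem (fun hmem => hpK hmem.1)]
    exact (h0 p.2 p.1 hpK).symm

lemma swap_eq (G : ℝ → Euc d → ℝ) (hG : Continuous (Function.uncurry G))
    (K : Set (Euc d)) (hK : IsCompact K) (h0 : ∀ θ x, x ∉ K → G θ x = 0) :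
    ∫ x : Euc d, ∫ θ in (0:ℝ)..1, G θ x = ∫ θ in (0:ℝ)..1, ∫ x : Euc d, G θ x := by
  simp only [intervalIntegral.integral_of_le zero_le_one]
  exact integral_integral_swap (key_int G hG K hK h0)

lemma theta_integrable (G : ℝ → Euc d → ℝ) (hG : Continuous (Function.uncurry G))
    (K : Set (Euc d)) (hK : IsCompact K) (h0 : ∀ θ x, x ∉ K → G θ x = 0) :
    IntervalIntegrable (fun θ => ∫ x : Euc d, G θ x) volume 0 1 := by
  rw [intervalIntegrable_iff_integrableOn_Ioc_of_le zero_le_one]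
  exact (key_int G hG K hK h0).integral_prod_right

end Fubini

set_option maxHeartbeats 1000000 in
/-- Integration-by-parts representation
`(J^η v, φ) = -Σₖ (𝒥^k v, D_kφ) + (𝒥^0 v, φ)`. -/
theorem Jη_integration_by_parts (d : ℕ) (K : ℝ) (hd : 1 ≤ d)
    (η : Euc d → Euc d) (hη : ContDiff ℝ 1 η)
    (hη0 : ∀ x, ‖η x‖ ≤ K) (hη1 : ∀ x, ‖fderiv ℝ η x‖ ≤ K)
    (v φ : Euc d → ℝ) (hv : ContDiff ℝ (⊤ : ℕ∞) v) (hvs : HasCompactSupport v)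
    (hφ : ContDiff ℝ (⊤ : ℕ∞) φ) (hφs : HasCompactSupport φ) :
    (∫ x : Euc d, (v (x + η x) - v x - fderiv ℝ v x (η x)) * φ x)
      = -(∑ k : Fin d, ∫ x : Euc d,
            Jk d η k v x * fderiv ℝ φ x (EuclideanSpace.single k 1)) +
        ∫ x : Euc d, J0 d η v x * φ x := by
  classical
  have hηc : Continuous η := hη.continuous
  have hDη : Continuous (fderiv ℝ η) := hη.continuous_fderiv one_ne_zero
  have hvc : Continuous v := hv.continuous
  have hDv : Continuous (fderiv ℝ v) := hv.continuous_fderiv (by simp)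
  have hDφ : Continuous (fderiv ℝ φ) := hφ.continuous_fderiv (by simp)
  have hΨ : Continuous fun p : ℝ × Euc d => p.2 + p.1 • η p.2 :=
    continuous_snd.add (continuous_fst.smul (hηc.comp continuous_snd))
  have hφ0 : ∀ x, x ∉ tsupport φ → φ x = 0 := fun x hx => image_eq_zero_of_notMem_tsupport hx
  have hDφ0 : ∀ x, x ∉ tsupport φ → fderiv ℝ φ x = 0 := by
    intro x hx
    by_contra h
    exact hx (support_fderiv_subset ℝ (Function.mem_support.2 h))
  -- the three integrand families
  set G1 : ℝ → Euc d → ℝ := fun θ x =>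
    (fderiv ℝ v (x + θ • η x) (η x) - fderiv ℝ v x (η x)) * φ x with hG1def
  set G2 : Fin d → ℝ → Euc d → ℝ := fun k θ x =>
    (η x k * (v (x + θ • η x) - v x)) * fderiv ℝ φ x (EuclideanSpace.single k 1) with hG2def
  set G3 : ℝ → Euc d → ℝ := fun θ x =>
    ((∑ k : Fin d, fderiv ℝ η x (EuclideanSpace.single k 1) k) * (v (x + θ • η x) - v x)
      + θ * ∑ k : Fin d, ∑ l : Fin d,
          η x k * fderiv ℝ η x (EuclideanSpace.single k 1) l *
            fderiv ℝ v (x + θ • η x) (EuclideanSpace.single l 1)) * φ x with hG3def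
  have hG1c : Continuous (Function.uncurry G1) := by
    apply Continuous.mul _ (hφ.continuous.comp continuous_snd)
    exact ((hDv.comp hΨ).clm_apply (hηc.comp continuous_snd)).sub
      ((hDv.comp continuous_snd).clm_apply (hηc.comp continuous_snd))
  have hG2c : ∀ k, Continuous (Function.uncurry (G2 k)) := by
    intro k
    apply Continuous.mul _ ((hDφ.comp continuous_snd).clm_apply continuous_const)
    exact (((PiLp.continuous_apply (p := 2) (β := fun _ : Fin d => ℝ) k).comp (hηc.comp continuous_snd)).mul
      ((hvc.comp hΨ).sub (hvc.comp continuous_snd)))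
  have hG3c : Continuous (Function.uncurry G3) := by
    apply Continuous.mul _ (hφ.continuous.comp continuous_snd)
    apply Continuous.add
    · exact (continuous_finset_sum _ fun k _ =>
        (PiLp.continuous_apply (p := 2) (β := fun _ : Fin d => ℝ) k).comp ((hDη.comp continuous_snd).clm_apply continuous_const)).mul
        ((hvc.comp hΨ).sub (hvc.comp continuous_snd))
    · apply continuous_fst.mul
      apply continuous_finset_sum _ fun k _ => continuous_finset_sum _ fun l _ => ?_
      exact (((PiLp.continuous_apply (p := 2) (β := fun _ : Fin d => ℝ) k).comp (hηc.comp continuous_snd)).mul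
        ((PiLp.continuous_apply (p := 2) (β := fun _ : Fin d => ℝ) l).comp ((hDη.comp continuous_snd).clm_apply continuous_const))).mul
        (((hDv.comp hΨ).clm_apply continuous_const))
  have hG10 : ∀ θ x, x ∉ tsupport φ → G1 θ x = 0 := fun θ x hx => by
    simp [hG1def, hφ0 x hx]
  have hG20 : ∀ k θ x, x ∉ tsupport φ → G2 k θ x = 0 := fun k θ x hx => by
    simp [hG2def, hDφ0 x hx]
  have hG30 : ∀ θ x, x ∉ tsupport φ → G3 θ x = 0 := fun θ x hx => by
    simp [hG3def, hφ0 x hx]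
  calc
    (∫ x : Euc d, (v (x + η x) - v x - fderiv ℝ v x (η x)) * φ x)
        = ∫ x : Euc d, ∫ θ in (0:ℝ)..1, G1 θ x := by
          apply integral_congr_ae (Filter.Eventually.of_forall fun x => ?_)
          rw [ftc_theta hv x, intervalIntegral.integral_mul_const]
    _ = ∫ θ in (0:ℝ)..1, ∫ x : Euc d, G1 θ x :=
          swap_eq G1 hG1c _ hφs hG10
    _ = ∫ θ in (0:ℝ)..1,
          (-(∑ k : Fin d, ∫ x : Euc d, G2 k θ x) - ∫ x : Euc d, G3 θ x) :=
          intervalIntegral.integral_congr fun θ _ => per_theta hη hv hφ hφs θ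
    _ = -(∑ k : Fin d, ∫ θ in (0:ℝ)..1, ∫ x : Euc d, G2 k θ x)
          - ∫ θ in (0:ℝ)..1, ∫ x : Euc d, G3 θ x := by
          have hI2 : ∀ k : Fin d,
              IntervalIntegrable (fun θ => ∫ x : Euc d, G2 k θ x) volume 0 1 :=
            fun k => theta_integrable (G2 k) (hG2c k) _ hφs (hG20 k)
          have hI3 : IntervalIntegrable (fun θ => ∫ x : Euc d, G3 θ x) volume 0 1 :=
            theta_integrable G3 hG3c _ hφs hG30
          have hfun : (∑ k : Fin d, fun θ => ∫ x : Euc d, G2 k θ x)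
              = fun θ => ∑ k : Fin d, ∫ x : Euc d, G2 k θ x := by
            funext θ
            exact Finset.sum_apply _ _ _
          have hsum' : IntervalIntegrable
              (fun θ => ∑ k : Fin d, ∫ x : Euc d, G2 k θ x) volume 0 1 :=
            hfun ▸ IntervalIntegrable.sum Finset.univ (fun k _ => hI2 k)
          have hneg : IntervalIntegrable
              (fun θ => -(∑ k : Fin d, ∫ x : Euc d, G2 k θ x)) volume 0 1 := hsum'.neg
          rw [intervalIntegral.integral_sub hneg hI3,
            intervalIntegral.integral_neg,
            intervalIntegral.integral_finset_sum (fun k _ => hI2 k)]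
    _ = -(∑ k : Fin d, ∫ x : Euc d,
            Jk d η k v x * fderiv ℝ φ x (EuclideanSpace.single k 1)) +
        ∫ x : Euc d, J0 d η v x * φ x := by
          rw [sub_eq_add_neg]
          congr 1
          · congr 1
            apply Finset.sum_congr rfl fun k _ => ?_
            rw [← swap_eq (G2 k) (hG2c k) _ hφs (hG20 k)]
            apply integral_congr_ae (Filter.Eventually.of_forall fun x => ?_)
            rw [Jk, ← intervalIntegral.integral_mul_const]
          · rw [← swap_eq G3 hG3c _ hφs hG30, ← integral_neg]
            apply integral_congr_ae (Filter.Eventually.of_forall fun x => ?_)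
            rw [J0, neg_mul, ← intervalIntegral.integral_mul_const]
end
end

section
/- Let d ≥ 1, K > 0 and p ∈ [2,∞). Let a^{ij}, b^i, c : ℝ^d → ℝ (i,j = 1,…,d) with a^{ij} = a^{ji}, and let σ^i = (σ^{ir})_{r≥1} and β = (β^r)_{r≥1} be ℓ²-valued functions on ℝ^d. Assume: a^{ij} together with its derivatives up to order 2, b^i together with its first-order derivatives, and c are continuous and bounded in absolute value by K; σ^i and β together with their first-order derivatives are continuous and bounded in ℓ²-norm by K; and the degenerate parabolicity condition holds: Σ_{i,j} (2a^{ij}(x) − Σ_r σ^{ir}(x)σ^{jr}(x)) z_i z_j ≥ 0 for all x, z ∈ ℝ^d. Set b̄^i := b^i − Σ_j D_j a^{ij}. Then there is a constant N depending only on d, p and K such that for every smooth compactly supported v : ℝ^d → ℝ: p ∫_{ℝ^d} [ − Σ_{i,j} D_i(|v|^{p−2}v) a^{ij} D_jv + Σ_i b̄^i |v|^{p−2} v D_iv + c |v|^p + ((p−1)/2) |v|^{p−2} Σ_{r≥1} | Σ_i σ^{ir} D_iv + β^r v |² ] dx ≤ N ∫_{ℝ^d} |v|^p dx. -/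
open MeasureTheory Filter Finset
noncomputable section

/-- The space `ℓ²` of square-summable real sequences. -/
abbrev ell2 := lp (fun _ : ℕ => ℝ) 2

/-- Iterated partial derivative `D_α` along a multi-number (list of coordinate directions). -/
def Dmulti {F : Type*} [NormedAddCommGroup F] [NormedSpace ℝ F] (d : ℕ) :
    List (Fin d) → (Euc d → F) → Euc d → F
  | [], f => f
  | i :: α, f => fun x => fderiv ℝ (Dmulti d α f) x (EuclideanSpace.single i 1)

section AuxLemmas
open Topology Set Function



lemma hasDerivAt_abs_rpow_mul_self {q : ℝ} (hq : 0 ≤ q) (t : ℝ) :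
    HasDerivAt (fun s : ℝ => |s| ^ q * s) ((q + 1) * |t| ^ q) t := by
  rcases lt_trichotomy t 0 with ht | rfl | ht
  · have h0 : HasDerivAt (fun s : ℝ => (-s)) (-1) t := (hasDerivAt_id t).neg
    have h1 := (Real.hasDerivAt_rpow_const (p := q+1) (x := -t)
      (Or.inl (by linarith))).comp t h0
    have h2 : HasDerivAt (fun s : ℝ => -((-s) ^ (q+1))) (-((q + 1) * (-t) ^ (q + 1 - 1) * -1)) t := h1.neg
    have h3 : HasDerivAt (fun s : ℝ => -((-s) ^ (q+1))) ((q+1) * |t| ^ q) t := by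
      convert h2 using 1
      rw [abs_of_neg ht, add_sub_cancel_right]
      ring
    refine h3.congr_of_eventuallyEq ?_
    filter_upwards [Iio_mem_nhds ht] with s hs
    have hs' : s < 0 := hs
    rw [abs_of_neg hs', Real.rpow_add (by linarith : (0:ℝ) < -s), Real.rpow_one]
    ring
  · rcases eq_or_lt_of_le hq with rfl | hq'
    · simpa using (hasDerivAt_id (0:ℝ)).congr_of_eventuallyEq
        (by filter_upwards with s; simp)
    · have h0 : Tendsto (fun s : ℝ => |s| ^ q) (𝓝[≠] (0:ℝ)) (𝓝 ((q+1) * |(0:ℝ)| ^ q)) := by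
        have hc := ((Real.continuous_rpow_const hq).comp continuous_abs).tendsto 0
        simp only [Function.comp_def, abs_zero, Real.zero_rpow hq'.ne'] at hc ⊢
        simpa [Real.zero_rpow hq'.ne'] using hc.mono_left nhdsWithin_le_nhds
      rw [hasDerivAt_iff_tendsto_slope]
      refine h0.congr' ?_
      filter_upwards [self_mem_nhdsWithin] with s hs
      have hs0 : s ≠ 0 := hs
      rw [slope_def_field]
      field_simp
      simp
  · have h1 := (Real.hasDerivAt_rpow_const (p := q+1) (x := t) (Or.inl (by linarith)))
    have h3 : HasDerivAt (fun s : ℝ => s ^ (q+1)) ((q+1) * |t| ^ q) t := by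
      convert h1 using 1
      rw [abs_of_pos ht, add_sub_cancel_right]
    refine h3.congr_of_eventuallyEq ?_
    filter_upwards [Ioi_mem_nhds ht] with s hs
    have hs' : 0 < s := hs
    rw [abs_of_pos hs', Real.rpow_add hs', Real.rpow_one]

lemma continuous_abs_rpow {q : ℝ} (hq : 0 ≤ q) : Continuous (fun t : ℝ => |t| ^ q) :=
  (Real.continuous_rpow_const hq).comp continuous_abs

lemma abs_rpow_mul_self_mul_self {p : ℝ} (hp : 2 ≤ p) (s : ℝ) :
    |s| ^ (p - 2) * s * s = |s| ^ p := by
  rcases eq_or_ne s 0 with rfl | hs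
  · simp [Real.zero_rpow (by positivity : p ≠ 0)]
  · have h : |s| ^ (p - 2) * |s| ^ (2:ℝ) = |s| ^ p := by
      rw [← Real.rpow_add (abs_pos.mpr hs)]; norm_num
    calc |s| ^ (p - 2) * s * s = |s| ^ (p - 2) * (s * s) := by ring
    _ = |s| ^ (p - 2) * |s| ^ (2:ℝ) := by
        rw [← abs_mul_abs_self s, Real.rpow_two, sq]
    _ = |s| ^ p := h

lemma my_hasDerivAt_abs_rpow {p : ℝ} (hp : 2 ≤ p) (t : ℝ) :
    HasDerivAt (fun s : ℝ => |s| ^ p) (p * (|t| ^ (p - 2) * t)) t := by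
  have h1 := (hasDerivAt_abs_rpow_mul_self (q := p - 2) (by linarith) t).mul (hasDerivAt_id t)
  have hfun : (fun s : ℝ => |s| ^ (p-2) * s * s) = (fun s : ℝ => |s| ^ p) :=
    funext fun s => abs_rpow_mul_self_mul_self hp s
  simp only [id_eq, Pi.mul_def] at h1
  rw [hfun] at h1
  refine h1.congr_deriv ?_
  ring

lemma integral_fderiv_apply_eq_zero {d : ℕ} {φ : Euc d → ℝ} (hφ : ContDiff ℝ 1 φ)
    (h : HasCompactSupport φ) (w : Euc d) : ∫ x : Euc d, fderiv ℝ φ x w = 0 := by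
  obtain ⟨C, hC⟩ := hφ.lipschitzWith_of_hasCompactSupport h one_ne_zero
  have h1 : LipschitzWith 0 (fun _ : Euc d => (1:ℝ)) := LipschitzWith.const 1
  have key := LipschitzWith.integral_lineDeriv_mul_eq (μ := volume) h1 hC h w
  have hconst : ∀ x : Euc d, lineDeriv ℝ (fun _ : Euc d => (1:ℝ)) x w = 0 := fun x => by
    rw [(differentiableAt_const _).lineDeriv_eq_fderiv]; simp
  simp only [hconst, zero_mul, integral_zero] at key
  have key2 : ∫ x : Euc d, lineDeriv ℝ φ x (-w) = 0 := by
    simpa using key.symm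
  have : ∀ x : Euc d, lineDeriv ℝ φ x (-w) = -(fderiv ℝ φ x w) := by
    intro x
    rw [(hφ.differentiable one_ne_zero x).lineDeriv_eq_fderiv]
    simp
  rw [show (fun x : Euc d => fderiv ℝ φ x w) = fun x => -(lineDeriv ℝ φ x (-w)) by
    funext x; rw [this x]; ring]
  rw [integral_neg, key2, neg_zero]

lemma norm_fderiv_eq_iteratedFDeriv_one {E F : Type*} [NormedAddCommGroup E] [NormedSpace ℝ E]
    [NormedAddCommGroup F] [NormedSpace ℝ F] (f : E → F) (x : E) :
    ‖fderiv ℝ f x‖ = ‖iteratedFDeriv ℝ 1 f x‖ := by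
  rw [← norm_iteratedFDeriv_fderiv, norm_iteratedFDeriv_zero]

lemma norm_fderiv_fderiv_eq_iteratedFDeriv_two {E F : Type*} [NormedAddCommGroup E]
    [NormedSpace ℝ E] [NormedAddCommGroup F] [NormedSpace ℝ F] (f : E → F) (x : E) :
    ‖fderiv ℝ (fderiv ℝ f) x‖ = ‖iteratedFDeriv ℝ 2 f x‖ := by
  rw [norm_fderiv_eq_iteratedFDeriv_one, norm_iteratedFDeriv_fderiv]

lemma ssum_factor {d : ℕ} (c : ℝ) (f g : Fin d → ℝ) (h : ∀ i, f i = c * g i) :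
    ∑ i, f i = c * ∑ i, g i := by
  rw [Finset.mul_sum]; exact Finset.sum_congr rfl fun i _ => h i

lemma dsum_factor {d : ℕ} (c : ℝ) (f g : Fin d → Fin d → ℝ) (h : ∀ i j, f i j = c * g i j) :
    ∑ i, ∑ j, f i j = c * ∑ i, ∑ j, g i j :=
  ssum_factor c _ _ fun i => ssum_factor c _ _ (h i)

lemma dsum_sub_factor {d : ℕ} (c : ℝ) (f g h : Fin d → Fin d → ℝ)
    (H : ∀ i j, f i j = c * g i j - h i j) :
    ∑ i, ∑ j, f i j = c * (∑ i, ∑ j, g i j) - ∑ i, ∑ j, h i j := by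
  rw [Finset.mul_sum, ← Finset.sum_sub_distrib]
  refine Finset.sum_congr rfl fun i _ => ?_
  rw [Finset.mul_sum, ← Finset.sum_sub_distrib]
  exact Finset.sum_congr rfl fun j _ => H i j

lemma ssum_two_factor {d : ℕ} (c₁ c₂ : ℝ) (f g h : Fin d → ℝ)
    (H : ∀ i, f i = c₁ * g i + c₂ * h i) :
    ∑ i, f i = c₁ * (∑ i, g i) + c₂ * (∑ i, h i) := by
  rw [Finset.mul_sum, Finset.mul_sum, ← Finset.sum_add_distrib]
  exact Finset.sum_congr rfl fun i _ => H i

end AuxLemmas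

set_option maxHeartbeats 2000000 in
/-- The zero order `p`-form estimate for a degenerate parabolic pair `(ℒ, ℳ)`. -/
theorem zero_order_p_form_estimate (d : ℕ) (p K : ℝ) (hd : 1 ≤ d) (hp : 2 ≤ p)
    (hK : 0 < K) :
    ∃ N : ℝ, 0 < N ∧
      ∀ (a : Fin d → Fin d → Euc d → ℝ) (b : Fin d → Euc d → ℝ) (c : Euc d → ℝ)
        (σ : Fin d → Euc d → ell2) (β : Euc d → ell2),
        (∀ i j, a i j = a j i) →
        (∀ i j, ContDiff ℝ 2 (a i j)) →
        (∀ i j, ∀ l ≤ 2, ∀ x, ‖iteratedFDeriv ℝ l (a i j) x‖ ≤ K) →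
        (∀ i, ContDiff ℝ 1 (b i)) →
        (∀ i, ∀ l ≤ 1, ∀ x, ‖iteratedFDeriv ℝ l (b i) x‖ ≤ K) →
        Continuous c → (∀ x, |c x| ≤ K) →
        (∀ i, ContDiff ℝ 1 (σ i)) →
        (∀ i, ∀ l ≤ 1, ∀ x, ‖iteratedFDeriv ℝ l (σ i) x‖ ≤ K) →
        ContDiff ℝ 1 β → (∀ l ≤ 1, ∀ x, ‖iteratedFDeriv ℝ l β x‖ ≤ K) →
        -- degenerate parabolicity
        (∀ (x : Euc d) (z : Fin d → ℝ),
          0 ≤ ∑ i : Fin d, ∑ j : Fin d,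
            (2 * a i j x - ∑' r : ℕ, (σ i x) r * (σ j x) r) * z i * z j) →
        ∀ v : Euc d → ℝ, ContDiff ℝ (⊤ : ℕ∞) v → HasCompactSupport v →
          p * (∫ x : Euc d,
              (-∑ i : Fin d, ∑ j : Fin d,
                  Dmulti d [i] (fun y => |v y| ^ (p - 2) * v y) x * a i j x *
                    Dmulti d [j] v x) +
              (∑ i : Fin d, (b i x - ∑ j : Fin d, Dmulti d [j] (a i j) x) *
                  (|v x| ^ (p - 2) * v x) * Dmulti d [i] v x) +
              c x * |v x| ^ p +
              ((p - 1) / 2) * |v x| ^ (p - 2) *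
                ∑' r : ℕ, (∑ i : Fin d, (σ i x) r * Dmulti d [i] v x + (β x) r * v x) ^ 2)
            ≤ N * ∫ x : Euc d, |v x| ^ p := by
  classical
  have hp0 : (0:ℝ) < p := by linarith
  have hp1 : (1:ℝ) < p := by linarith
  have hq : (0:ℝ) ≤ p - 2 := by linarith
  have hd0 : (0:ℝ) ≤ (d:ℝ) := Nat.cast_nonneg d
  refine ⟨p*K + p*p*K^2 + (d:ℝ)*K + (d:ℝ)*(d:ℝ)*K + 2*(d:ℝ)*p*K^2 + 1, by
    nlinarith [mul_pos hp0 hK, mul_nonneg hd0 hK.le, mul_nonneg (mul_nonneg hd0 hd0) hK.le,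
      mul_nonneg (mul_nonneg (mul_nonneg (by norm_num : (0:ℝ) ≤ 2) hd0) hp0.le) (sq_nonneg K),
      mul_pos (mul_pos hp0 hp0) (pow_pos hK 2)], ?_⟩
  intro a b c σ β hasymm haC haB hbC hbB hcC hcB hσC hσB hβC hβB hpar v hv hvs
  set e : Fin d → Euc d := fun i => EuclideanSpace.single i (1:ℝ) with he
  have hnorme : ∀ i, ‖e i‖ = 1 := fun i => by
    rw [he]; rw [EuclideanSpace.norm_single]; norm_num
  have hvd : Differentiable ℝ v := hv.differentiable (by simp)
  -- basic norm bounds on the coefficients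
  have hβx : ∀ x, ‖β x‖ ≤ K := fun x => by
    have := hβB 0 (by norm_num) x; rwa [norm_iteratedFDeriv_zero] at this
  have hσx : ∀ i x, ‖σ i x‖ ≤ K := fun i x => by
    have := hσB i 0 (by norm_num) x; rwa [norm_iteratedFDeriv_zero] at this
  have hβd : ∀ x, ‖fderiv ℝ β x‖ ≤ K := fun x => by
    have := hβB 1 le_rfl x; rwa [← norm_fderiv_eq_iteratedFDeriv_one] at this
  have hσd : ∀ i x, ‖fderiv ℝ (σ i) x‖ ≤ K := fun i x => by
    have := hσB i 1 le_rfl x; rwa [← norm_fderiv_eq_iteratedFDeriv_one] at this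
  have hbd : ∀ i x, ‖fderiv ℝ (b i) x‖ ≤ K := fun i x => by
    have := hbB i 1 le_rfl x; rwa [← norm_fderiv_eq_iteratedFDeriv_one] at this
  have ha2 : ∀ i j x, ‖fderiv ℝ (fderiv ℝ (a i j)) x‖ ≤ K := fun i j x => by
    have := haB i j 2 le_rfl x; rwa [← norm_fderiv_fderiv_eq_iteratedFDeriv_two] at this
  -- the key functions
  set Dv : Fin d → Euc d → ℝ := fun i x => fderiv ℝ v x (e i) with hDvdef
  set u : Euc d → ℝ := fun x => |v x| ^ p with hudef
  set g : Fin d → Euc d → ℝ := fun i x =>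
    (b i x - ∑ j, fderiv ℝ (a i j) x (e j)) + (p-1) * (inner ℝ (σ i x) (β x) : ℝ) with hgdef
  set DU : Fin d → Euc d → ℝ := fun i x => p * (|v x| ^ (p-2) * v x) * Dv i x with hDUdef
  set hbar : Euc d → ℝ := fun x => p * c x + (p*(p-1)/2) * ‖β x‖^2 with hhbardef
  set R : Euc d → ℝ := fun x => -(p*(p-1)/2) * |v x| ^ (p-2) *
    ∑ i, ∑ j, (2 * a i j x - (inner ℝ (σ i x) (σ j x) : ℝ)) * Dv i x * Dv j x with hRdef
  -- derivative facts
  have hDm : ∀ (f : Euc d → ℝ) (i : Fin d) (x : Euc d),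
      Dmulti d [i] f x = fderiv ℝ f x (e i) := fun f i x => rfl
  have huF : ∀ x, HasFDerivAt u ((p * (|v x| ^ (p-2) * v x)) • fderiv ℝ v x) x := fun x =>
    (my_hasDerivAt_abs_rpow hp (v x)).comp_hasFDerivAt x (hvd x).hasFDerivAt
  have hDu : ∀ i x, fderiv ℝ u x (e i) = DU i x := fun i x => by
    rw [(huF x).fderiv]; simp only [ContinuousLinearMap.smul_apply, smul_eq_mul, hDUdef, hDvdef]
  have hwF : ∀ x, HasFDerivAt (fun y => |v y| ^ (p-2) * v y)
      (((p - 2 + 1) * |v x| ^ (p-2)) • fderiv ℝ v x) x := fun x =>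
    (hasDerivAt_abs_rpow_mul_self hq (v x)).comp_hasFDerivAt x (hvd x).hasFDerivAt
  have hDw : ∀ i x, fderiv ℝ (fun y => |v y| ^ (p-2) * v y) x (e i)
      = (p - 1) * |v x| ^ (p-2) * Dv i x := fun i x => by
    rw [(hwF x).fderiv]; simp only [ContinuousLinearMap.smul_apply, smul_eq_mul, hDvdef]; ring
  -- ell2 facts
  have hpar' : ∀ i j (x : Euc d), (∑' r, σ i x r * σ j x r) = (inner ℝ (σ i x) (σ j x) : ℝ) := by
    intro i j x
    rw [lp.inner_eq_tsum]; simp [RCLike.inner_apply, mul_comm]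
  have hT : ∀ x : Euc d, (∑' r : ℕ, (∑ i, σ i x r * Dv i x + β x r * v x) ^ 2)
      = (∑ i, ∑ j, (inner ℝ (σ i x) (σ j x) : ℝ) * Dv i x * Dv j x)
        + 2 * (v x * ∑ i, (inner ℝ (σ i x) (β x) : ℝ) * Dv i x)
        + v x * v x * ‖β x‖^2 := by
    intro x
    set s : ell2 := ∑ i, Dv i x • σ i x with hs
    set t : ell2 := v x • β x with ht
    have hcoe : ∀ r : ℕ, (∑ i, σ i x r * Dv i x + β x r * v x) = (s + t) r := by
      intro r
      rw [hs, ht, lp.coeFn_add, lp.coeFn_sum, Pi.add_apply, Finset.sum_apply]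
      simp [mul_comm]
    have h1 : (∑' r : ℕ, (∑ i, σ i x r * Dv i x + β x r * v x) ^ 2)
        = (inner ℝ (s + t) (s + t) : ℝ) := by
      rw [lp.inner_eq_tsum]
      refine tsum_congr fun r => ?_
      rw [hcoe r]
      simp [RCLike.inner_apply, sq]
    rw [h1, real_inner_add_add_self]
    have hss : (inner ℝ s s : ℝ) = ∑ i, ∑ j, (inner ℝ (σ i x) (σ j x) : ℝ) * Dv i x * Dv j x := by
      rw [hs, sum_inner]
      refine Finset.sum_congr rfl fun i _ => ?_
      rw [real_inner_smul_left, inner_sum, Finset.mul_sum]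
      refine Finset.sum_congr rfl fun j _ => ?_
      rw [real_inner_smul_right]
      ring
    have hst : (inner ℝ s t : ℝ) = v x * ∑ i, (inner ℝ (σ i x) (β x) : ℝ) * Dv i x := by
      rw [hs, ht, sum_inner, Finset.mul_sum]
      refine Finset.sum_congr rfl fun i _ => ?_
      rw [real_inner_smul_left, real_inner_smul_right]
      ring
    have htt : (inner ℝ t t : ℝ) = v x * v x * ‖β x‖^2 := by
      rw [ht, real_inner_smul_left, real_inner_smul_right, real_inner_self_eq_norm_sq]
      ring
    rw [hss, hst, htt]
  -- the pointwise key identity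
  have hkey : ∀ x : Euc d, p *
      ((-∑ i : Fin d, ∑ j : Fin d,
          Dmulti d [i] (fun y => |v y| ^ (p - 2) * v y) x * a i j x * Dmulti d [j] v x) +
        (∑ i : Fin d, (b i x - ∑ j : Fin d, Dmulti d [j] (a i j) x) *
            (|v x| ^ (p - 2) * v x) * Dmulti d [i] v x) +
        c x * |v x| ^ p +
        ((p - 1) / 2) * |v x| ^ (p - 2) *
          ∑' r : ℕ, (∑ i : Fin d, (σ i x) r * Dmulti d [i] v x + (β x) r * v x) ^ 2)
      = R x + ((∑ i, g i x * DU i x) + hbar x * u x) := by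
    intro x
    have hDve : ∀ (i : Fin d) (y : Euc d), fderiv ℝ v y (e i) = Dv i y := fun _ _ => rfl
    simp only [hDm, hDw, hDve, hT x, hRdef, hgdef, hDUdef, hhbardef, hudef]
    have e1 : ∑ i, ∑ j, ((p-1) * |v x| ^ (p-2) * Dv i x) * a i j x * Dv j x
        = ((p-1) * |v x| ^ (p-2)) * ∑ i, ∑ j, a i j x * Dv i x * Dv j x :=
      dsum_factor _ _ _ (fun i j => by ring)
    have e2 : ∑ i, (b i x - ∑ j, fderiv ℝ (a i j) x (e j)) * (|v x| ^ (p-2) * v x) * Dv i x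
        = (|v x| ^ (p-2) * v x) * ∑ i, (b i x - ∑ j, fderiv ℝ (a i j) x (e j)) * Dv i x :=
      ssum_factor _ _ _ (fun i => by ring)
    have e3 : ∑ i, ∑ j, (2 * a i j x - (inner ℝ (σ i x) (σ j x) : ℝ)) * Dv i x * Dv j x
        = 2 * (∑ i, ∑ j, a i j x * Dv i x * Dv j x)
          - ∑ i, ∑ j, (inner ℝ (σ i x) (σ j x) : ℝ) * Dv i x * Dv j x :=
      dsum_sub_factor _ _ _ _ (fun i j => by ring)
    have e4 : ∑ i, ((b i x - ∑ j, fderiv ℝ (a i j) x (e j)) + (p-1) * (inner ℝ (σ i x) (β x) : ℝ))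
          * (p * (|v x| ^ (p-2) * v x) * Dv i x)
        = (p * (|v x| ^ (p-2) * v x)) * (∑ i, (b i x - ∑ j, fderiv ℝ (a i j) x (e j)) * Dv i x)
          + ((p-1) * p * (|v x| ^ (p-2) * v x)) * (∑ i, (inner ℝ (σ i x) (β x) : ℝ) * Dv i x) :=
      ssum_two_factor _ _ _ _ _ (fun i => by ring)
    rw [e1, e2, e3, e4]
    have hΦv : |v x| ^ (p-2) * v x * v x = |v x| ^ p := abs_rpow_mul_self_mul_self hp (v x)
    linear_combination (p*(p-1)/2 * ‖β x‖^2) * hΦv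
  -- support and continuity facts
  set Nv : ℝ := p*K + p*p*K^2 + (d:ℝ)*K + (d:ℝ)*(d:ℝ)*K + 2*(d:ℝ)*p*K^2 + 1 with hNvdef
  have hsupp : ∀ (X : Euc d → ℝ), (∀ x, x ∉ tsupport v → X x = 0) → HasCompactSupport X :=
    fun X hX => hvs.mono' fun x hx => by
      by_contra h; exact hx (hX x h)
  have hv0 : ∀ x, x ∉ tsupport v → v x = 0 := fun x hx => image_eq_zero_of_notMem_tsupport hx
  have hDv0 : ∀ x, x ∉ tsupport v → fderiv ℝ v x = 0 := fun x hx =>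
    Function.notMem_support.mp (fun hs => hx (support_fderiv_subset ℝ hs))
  have hu0 : ∀ x, x ∉ tsupport v → u x = 0 := fun x hx => by
    rw [hudef]; simp [hv0 x hx, Real.zero_rpow hp0.ne']
  have hu0' : ∀ x, 0 ≤ u x := fun x => by
    rw [hudef]; exact Real.rpow_nonneg (abs_nonneg _) _
  have hint : ∀ (X : Euc d → ℝ), Continuous X → (∀ x, x ∉ tsupport v → X x = 0) →
      Integrable X volume :=
    fun X hc h0 => hc.integrable_of_hasCompactSupport (hsupp X h0)
  have hDvC : ∀ i, Continuous (Dv i) := fun i => by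
    rw [hDvdef]
    exact (hv.continuous_fderiv (by simp)).clm_apply continuous_const
  have hΦC : Continuous (fun x => |v x| ^ (p-2)) := (continuous_abs_rpow hq).comp hv.continuous
  have huC : ContDiff ℝ 1 u := by
    rw [hudef]; simpa [Real.norm_eq_abs] using (hv.of_le (by simp)).norm_rpow hp1
  have hgC : ∀ i, ContDiff ℝ 1 (g i) := fun i => by
    rw [hgdef]
    refine ContDiff.add (ContDiff.sub (hbC i) ?_)
      (ContDiff.mul contDiff_const (ContDiff.inner ℝ (hσC i) hβC))
    exact ContDiff.sum fun j _ => ((haC i j).fderiv_right (by norm_num)).clm_apply contDiff_const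
  have hDgC : ∀ i, Continuous (fun x => fderiv ℝ (g i) x (e i)) := fun i =>
    ((hgC i).continuous_fderiv one_ne_zero).clm_apply continuous_const
  have haCont : ∀ i j, Continuous (a i j) := fun i j => (haC i j).continuous
  have hσσC : ∀ i j, Continuous (fun x => (inner ℝ (σ i x) (σ j x) : ℝ)) := fun i j =>
    Continuous.inner (hσC i).continuous (hσC j).continuous
  have hRC : Continuous R := by
    rw [hRdef]
    refine Continuous.mul (continuous_const.mul hΦC) ?_
    refine continuous_finset_sum _ fun i _ => continuous_finset_sum _ fun j _ => ?_
    exact (((continuous_const.mul (haCont i j)).sub (hσσC i j)).mul (hDvC i)).mul (hDvC j)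
  have hR0 : ∀ x, x ∉ tsupport v → R x = 0 := fun x hx => by
    rw [hRdef]; simp [hDvdef, hDv0 x hx]
  have hRint : Integrable R volume := hint R hRC hR0
  have hRnonpos : ∀ x, R x ≤ 0 := by
    intro x
    have hz := hpar x (fun i => Dv i x)
    simp only [hpar'] at hz
    have hΦ0 : 0 ≤ |v x| ^ (p-2) := Real.rpow_nonneg (abs_nonneg _) _
    have hc0 : 0 ≤ p*(p-1)/2 := by nlinarith
    rw [hRdef]
    have hmul := mul_nonneg (mul_nonneg hc0 hΦ0) hz
    nlinarith [hmul]
  have hDUC : ∀ i, Continuous (DU i) := fun i => by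
    rw [hDUdef]
    exact (continuous_const.mul (hΦC.mul hv.continuous)).mul (hDvC i)
  have hDU0 : ∀ i x, x ∉ tsupport v → DU i x = 0 := fun i x hx => by
    rw [hDUdef]; simp [hDvdef, hDv0 x hx]
  have hgDUint : ∀ i, Integrable (fun x => g i x * DU i x) volume := fun i =>
    hint _ ((hgC i).continuous.mul (hDUC i)) (fun x hx => by simp [hDU0 i x hx])
  have hhbarC : Continuous hbar := by
    rw [hhbardef]
    exact (continuous_const.mul hcC).add (continuous_const.mul (hβC.continuous.norm.pow 2))
  have hhbaruint : Integrable (fun x => hbar x * u x) volume :=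
    hint _ (hhbarC.mul huC.continuous) (fun x hx => by simp [hu0 x hx])
  have hDguint : ∀ i, Integrable (fun x => fderiv ℝ (g i) x (e i) * u x) volume := fun i =>
    hint _ ((hDgC i).mul huC.continuous) (fun x hx => by simp [hu0 x hx])
  -- integration by parts
  have hIBP : ∀ i, ∫ x : Euc d, g i x * DU i x = -∫ x : Euc d, fderiv ℝ (g i) x (e i) * u x := by
    intro i
    have hφC : ContDiff ℝ 1 (fun x => g i x * u x) := (hgC i).mul huC
    have hφs : HasCompactSupport (fun x => g i x * u x) :=
      hsupp _ (fun x hx => by simp [hu0 x hx])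
    have h0 := integral_fderiv_apply_eq_zero hφC hφs (e i)
    have hder : ∀ x, fderiv ℝ (fun y => g i y * u y) x (e i)
        = fderiv ℝ (g i) x (e i) * u x + g i x * DU i x := by
      intro x
      have h1 : HasFDerivAt (fun y => g i y * u y)
          (g i x • ((p * (|v x| ^ (p-2) * v x)) • fderiv ℝ v x) + u x • fderiv ℝ (g i) x) x :=
        HasFDerivAt.mul (((hgC i).differentiable one_ne_zero x).hasFDerivAt) (huF x)
      rw [h1.fderiv]
      simp only [ContinuousLinearMap.add_apply, ContinuousLinearMap.smul_apply, smul_eq_mul,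
        hDUdef, hDvdef]
      ring
    rw [show (fun x : Euc d => fderiv ℝ (fun y => g i y * u y) x (e i))
        = fun x => fderiv ℝ (g i) x (e i) * u x + g i x * DU i x from funext hder] at h0
    rw [integral_add (hDguint i) (hgDUint i)] at h0
    linarith
  -- bounds
  have happ : ∀ (L : Euc d →L[ℝ] ℝ) (i : Fin d), |L (e i)| ≤ ‖L‖ := fun L i => by
    calc |L (e i)| = ‖L (e i)‖ := (Real.norm_eq_abs _).symm
    _ ≤ ‖L‖ * ‖e i‖ := L.le_opNorm _
    _ = ‖L‖ := by rw [hnorme i, mul_one]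
  have hDgbound : ∀ i x, |fderiv ℝ (g i) x (e i)| ≤ K + (d:ℝ)*K + (p-1)*(2*K^2) := by
    intro i x
    have hbdiff : DifferentiableAt ℝ (b i) x := (hbC i).differentiable one_ne_zero x
    have hAC : ∀ j, ContDiff ℝ 1 (fun y => fderiv ℝ (a i j) y (e j)) := fun j =>
      ((haC i j).fderiv_right (by norm_num)).clm_apply contDiff_const
    have hAdiff : ∀ j, DifferentiableAt ℝ (fun y => fderiv ℝ (a i j) y (e j)) x := fun j =>
      (hAC j).differentiable one_ne_zero x
    have hsumdiff : DifferentiableAt ℝ (fun y => ∑ j, fderiv ℝ (a i j) y (e j)) x :=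
      DifferentiableAt.fun_sum (fun j _ => hAdiff j)
    have hinndiff : DifferentiableAt ℝ (fun y => (inner ℝ (σ i y) (β y) : ℝ)) x :=
      ((hσC i).inner ℝ hβC).differentiable one_ne_zero x
    rw [hgdef]
    simp only []
    rw [fderiv_fun_add (hbdiff.fun_sub hsumdiff) (hinndiff.const_mul _),
      fderiv_fun_sub hbdiff hsumdiff, fderiv_const_mul hinndiff,
      fderiv_fun_sum (fun j _ => hAdiff j)]
    simp only [ContinuousLinearMap.add_apply, ContinuousLinearMap.sub_apply,
      ContinuousLinearMap.coe_sum', Finset.sum_apply, ContinuousLinearMap.smul_apply,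
      smul_eq_mul]
    have h1 : |fderiv ℝ (b i) x (e i)| ≤ K := (happ _ i).trans (hbd i x)
    have h2 : ∀ j, |fderiv ℝ (fun y => fderiv ℝ (a i j) y (e j)) x (e i)| ≤ K := by
      intro j
      have heq : fderiv ℝ (fun y => fderiv ℝ (a i j) y (e j)) x
          = (fderiv ℝ (fderiv ℝ (a i j)) x).flip (e j) :=
        (fderiv_clm_apply (((haC i j).fderiv_right (by norm_num)).differentiable one_ne_zero x)
          (differentiableAt_const _)).trans (by simp)
      rw [heq]
      calc |((fderiv ℝ (fderiv ℝ (a i j)) x).flip (e j)) (e i)|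
          = |(fderiv ℝ (fderiv ℝ (a i j)) x (e i)) (e j)| := by
            rw [ContinuousLinearMap.flip_apply]
      _ ≤ ‖fderiv ℝ (fderiv ℝ (a i j)) x (e i)‖ := happ _ j
      _ ≤ ‖fderiv ℝ (fderiv ℝ (a i j)) x‖ * ‖e i‖ := ContinuousLinearMap.le_opNorm _ _
      _ = ‖fderiv ℝ (fderiv ℝ (a i j)) x‖ := by rw [hnorme i, mul_one]
      _ ≤ K := ha2 i j x
    have hS : |∑ j, fderiv ℝ (fun y => fderiv ℝ (a i j) y (e j)) x (e i)| ≤ (d:ℝ) * K := by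
      calc |∑ j, fderiv ℝ (fun y => fderiv ℝ (a i j) y (e j)) x (e i)|
          ≤ ∑ j, |fderiv ℝ (fun y => fderiv ℝ (a i j) y (e j)) x (e i)| :=
            Finset.abs_sum_le_sum_abs _ _
      _ ≤ ∑ _j : Fin d, K := Finset.sum_le_sum fun j _ => h2 j
      _ = (d:ℝ) * K := by simp [Finset.sum_const, Finset.card_univ, mul_comm]
    have h3 : |fderiv ℝ (fun y => (inner ℝ (σ i y) (β y) : ℝ)) x (e i)| ≤ 2*K^2 := by
      rw [fderiv_inner_apply ℝ ((hσC i).differentiable one_ne_zero x)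
        (hβC.differentiable one_ne_zero x) (e i)]
      have hb1 : |(inner ℝ (σ i x) (fderiv ℝ β x (e i)) : ℝ)| ≤ K * K := by
        refine (abs_real_inner_le_norm _ _).trans ?_
        have : ‖fderiv ℝ β x (e i)‖ ≤ K := by
          calc ‖fderiv ℝ β x (e i)‖ ≤ ‖fderiv ℝ β x‖ * ‖e i‖ :=
            ContinuousLinearMap.le_opNorm _ _
          _ = ‖fderiv ℝ β x‖ := by rw [hnorme i, mul_one]
          _ ≤ K := hβd x
        exact mul_le_mul (hσx i x) this (norm_nonneg _) hK.le
      have hb2 : |(inner ℝ (fderiv ℝ (σ i) x (e i)) (β x) : ℝ)| ≤ K * K := by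
        refine (abs_real_inner_le_norm _ _).trans ?_
        have : ‖fderiv ℝ (σ i) x (e i)‖ ≤ K := by
          calc ‖fderiv ℝ (σ i) x (e i)‖ ≤ ‖fderiv ℝ (σ i) x‖ * ‖e i‖ :=
            ContinuousLinearMap.le_opNorm _ _
          _ = ‖fderiv ℝ (σ i) x‖ := by rw [hnorme i, mul_one]
          _ ≤ K := hσd i x
        exact mul_le_mul this (hβx x) (norm_nonneg _) hK.le
      calc |(inner ℝ (σ i x) (fderiv ℝ β x (e i)) : ℝ) + (inner ℝ (fderiv ℝ (σ i) x (e i)) (β x) : ℝ)|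
          ≤ |(inner ℝ (σ i x) (fderiv ℝ β x (e i)) : ℝ)|
            + |(inner ℝ (fderiv ℝ (σ i) x (e i)) (β x) : ℝ)| := abs_add_le _ _
      _ ≤ K * K + K * K := add_le_add hb1 hb2
      _ = 2*K^2 := by ring
    have hp1' : (0:ℝ) ≤ p - 1 := by linarith
    have b1 := abs_le.mp h1
    have bS := abs_le.mp hS
    have b3 := abs_le.mp h3
    rw [abs_le]
    constructor <;> [nlinarith [b1.1, bS.2, b3.1, mul_le_mul_of_nonneg_left b3.1 hp1'];
      nlinarith [b1.2, bS.1, b3.2, mul_le_mul_of_nonneg_left b3.2 hp1']]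
  have hsumDg : ∀ x, |∑ i, fderiv ℝ (g i) x (e i)| ≤ (d:ℝ) * (K + (d:ℝ)*K + (p-1)*(2*K^2)) := by
    intro x
    calc |∑ i, fderiv ℝ (g i) x (e i)| ≤ ∑ i, |fderiv ℝ (g i) x (e i)| :=
          Finset.abs_sum_le_sum_abs _ _
    _ ≤ ∑ _i : Fin d, (K + (d:ℝ)*K + (p-1)*(2*K^2)) := Finset.sum_le_sum fun i _ => hDgbound i x
    _ = (d:ℝ) * (K + (d:ℝ)*K + (p-1)*(2*K^2)) := by
        simp only [Finset.sum_const, Finset.card_univ, Fintype.card_fin, nsmul_eq_mul]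
  have hZbound : ∀ x, hbar x - ∑ i, fderiv ℝ (g i) x (e i) ≤ Nv := by
    intro x
    rw [hhbardef, hNvdef]
    simp only []
    have h5 : ‖β x‖^2 ≤ K^2 := by nlinarith [hβx x, norm_nonneg (β x)]
    have h6 : p * c x ≤ p * K :=
      mul_le_mul_of_nonneg_left (le_of_abs_le (hcB x)) hp0.le
    have h7 : p*(p-1)/2 * ‖β x‖^2 ≤ p*(p-1)/2 * K^2 :=
      mul_le_mul_of_nonneg_left h5 (by nlinarith)
    have hc2 := (abs_le.mp (hsumDg x)).1
    have harith : p*K + (p*(p-1)/2)*K^2 + (d:ℝ)*(K + (d:ℝ)*K + (p-1)*(2*K^2))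
        ≤ p*K + p*p*K^2 + (d:ℝ)*K + (d:ℝ)*(d:ℝ)*K + 2*(d:ℝ)*p*K^2 + 1 := by
      nlinarith [mul_nonneg (mul_nonneg hp0.le hp0.le) (sq_nonneg K),
        mul_nonneg hp0.le (sq_nonneg K), mul_nonneg hd0 (sq_nonneg K)]
    linarith [h6, h7, hc2, harith]
  -- assembling the integrals
  have step1 := integral_congr_ae (μ := (volume : Measure (Euc d))) (ae_of_all _ hkey)
  rw [integral_const_mul] at step1
  rw [step1]
  have hZint : Integrable (fun x => (hbar x - ∑ i, fderiv ℝ (g i) x (e i)) * u x) volume :=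
    hint _ ((hhbarC.sub (continuous_finset_sum _ fun i _ => hDgC i)).mul huC.continuous)
      (fun x hx => by simp [hu0 x hx])
  have hNuint : Integrable (fun x => Nv * u x) volume :=
    hint _ (continuous_const.mul huC.continuous) (fun x hx => by simp [hu0 x hx])
  have huint : Integrable u volume := hint u huC.continuous hu0
  have hTsumint : Integrable (fun x : Euc d => ∑ i, g i x * DU i x) volume :=
    integrable_finset_sum _ (fun i _ => hgDUint i)
  have hTint : Integrable (fun x : Euc d => (∑ i, g i x * DU i x) + hbar x * u x) volume :=
    hTsumint.add hhbaruint
  calc ∫ x : Euc d, (R x + ((∑ i, g i x * DU i x) + hbar x * u x))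
      = (∫ x : Euc d, R x)
        + ((∑ i, ∫ x : Euc d, g i x * DU i x) + ∫ x : Euc d, hbar x * u x) := by
        rw [show (∫ x : Euc d, (R x + ((∑ i, g i x * DU i x) + hbar x * u x)))
            = (∫ x : Euc d, R x) + ∫ x : Euc d, ((∑ i, g i x * DU i x) + hbar x * u x) from
          integral_add hRint hTint]
        congr 1
        rw [show (∫ x : Euc d, ((∑ i, g i x * DU i x) + hbar x * u x))
            = (∫ x : Euc d, ∑ i, g i x * DU i x) + ∫ x : Euc d, hbar x * u x from
          integral_add hTsumint hhbaruint]
        congr 1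
        exact integral_finset_sum _ (fun i _ => hgDUint i)
  _ ≤ 0 + ((∑ i, ∫ x : Euc d, g i x * DU i x) + ∫ x : Euc d, hbar x * u x) := by
        have : (∫ x : Euc d, R x) ≤ 0 := integral_nonpos (fun x => hRnonpos x)
        linarith
  _ = (∑ i, -∫ x : Euc d, fderiv ℝ (g i) x (e i) * u x) + ∫ x : Euc d, hbar x * u x := by
        rw [zero_add]
        congr 1
        exact Finset.sum_congr rfl fun i _ => hIBP i
  _ = ∫ x : Euc d, (hbar x - ∑ i, fderiv ℝ (g i) x (e i)) * u x := by
        have h6 : (fun x : Euc d => (hbar x - ∑ i, fderiv ℝ (g i) x (e i)) * u x)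
            = fun x => hbar x * u x - ∑ i, fderiv ℝ (g i) x (e i) * u x := by
          funext x; rw [sub_mul, Finset.sum_mul]
        rw [h6, integral_sub hhbaruint (integrable_finset_sum _ fun i _ => hDguint i),
          integral_finset_sum _ (fun i _ => hDguint i), Finset.sum_neg_distrib]
        ring
  _ ≤ ∫ x : Euc d, Nv * u x :=
        integral_mono hZint hNuint fun x =>
          mul_le_mul_of_nonneg_right (hZbound x) (hu0' x)
  _ = Nv * ∫ x : Euc d, u x := integral_const_mul _ _
end
end
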